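/- arXiv:1610.05400 — 6 statements merged into one kernel-verified Lean document; each statement's English description precedes it below -/
import Mathlib

section
/- (Proposition 1) Suppose γ_r > 0 and γ_c > 0. Then J(Z) = 0 if and only if there exist real numbers μ_{rc}, for r = 1,…,R and c = 1,…,C, such that Z = Σ_{r=1}^R Σ_{c=1}^C μ_{rc} χ_{A_r} χ_{B_c}^T. -/
/-! Each half of `J` is a sum of nonnegative terms, so `J(Z) = 0` exactly when rows of `Z`
joined by an edge of the row graph agree and columns joined by an edge of the column graph agree.
Propagating along walks, `Z i j` then depends only on the row component of `i` and the column
component of `j`, which is what the indicator expansion says. -/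

open Matrix BigOperators Finset

/-- The graph on `Fin n` with `i ~ j` iff `i ≠ j` and `w i j > 0` (for symmetric `w`). -/
def graphOf {n : ℕ} (w : Fin n → Fin n → ℝ) : SimpleGraph (Fin n) :=
  SimpleGraph.fromRel (fun i j => 0 < w i j)

/-- The 0/1 indicator vector of a subset. -/
noncomputable def chi {n : ℕ} (A : Set (Fin n)) : Fin n → ℝ :=
  A.indicator (fun _ => (1 : ℝ))

/-- The BMC smoothing penalty
`J(Z) = (γr/2) ∑_{i<j} w i j ‖Z_{i·} - Z_{j·}‖² + (γc/2) ∑_{i<j} w̃ i j ‖Z_{·i} - Z_{·j}‖²`. -/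
noncomputable def Jpen {n p : ℕ} (γr γc : ℝ) (w : Fin n → Fin n → ℝ)
    (wt : Fin p → Fin p → ℝ) (Z : Matrix (Fin n) (Fin p) ℝ) : ℝ :=
  γr / 2 * ∑ i, ∑ j ∈ Finset.Ioi i, w i j * ∑ k, (Z i k - Z j k) ^ 2
    + γc / 2 * ∑ i, ∑ j ∈ Finset.Ioi i, wt i j * ∑ k, (Z k i - Z k j) ^ 2

theorem SimpleGraph.forall_adj_imp_eq_iff_forall_connectedComponentMk_eq {V α : Type*}
    {G : SimpleGraph V} {f : V → α} :
    (∀ a b, G.Adj a b → f a = f b) ↔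
      ∀ a b, G.connectedComponentMk a = G.connectedComponentMk b → f a = f b := by
  refine ⟨fun h a b hab => ?_,
    fun h a b hadj => h a b (ConnectedComponent.connectedComponentMk_eq_of_adj hadj)⟩
  obtain ⟨walk⟩ := ConnectedComponent.exact hab
  clear hab
  induction walk with
  | nil => rfl
  | cons hadj _ ih => exact (h _ _ hadj).trans ih

section DirichletEnergy

variable {n : ℕ} {κ : Type*} [Fintype κ] {w : Fin n → Fin n → ℝ}

noncomputable def dirichletEnergy (w : Fin n → Fin n → ℝ) (x : Matrix (Fin n) κ ℝ) : ℝ :=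
  ∑ i, ∑ j ∈ Ioi i, w i j * ∑ k, (x i k - x j k) ^ 2

theorem dirichletEnergy_nonneg (hnonneg : ∀ i j, 0 ≤ w i j) (x : Matrix (Fin n) κ ℝ) :
    0 ≤ dirichletEnergy w x :=
  sum_nonneg fun i _ => sum_nonneg fun j _ =>
    mul_nonneg (hnonneg i j) (sum_nonneg fun _ _ => sq_nonneg _)

theorem dirichletEnergy_eq_zero_iff (hsymm : ∀ i j, w i j = w j i)
    (hnonneg : ∀ i j, 0 ≤ w i j) (x : Matrix (Fin n) κ ℝ) :
    dirichletEnergy w x = 0 ↔ ∀ a b, (graphOf w).Adj a b → x a = x b := by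
  have hterm : ∀ i j, 0 ≤ w i j * ∑ k, (x i k - x j k) ^ 2 := fun i j =>
    mul_nonneg (hnonneg i j) (sum_nonneg fun _ _ => sq_nonneg _)
  have hpair : ∀ i j, w i j * ∑ k, (x i k - x j k) ^ 2 = 0 ↔ (0 < w i j → x i = x j) := by
    intro i j
    rw [mul_eq_zero, sum_eq_zero_iff_of_nonneg fun _ _ => sq_nonneg _, funext_iff,
      (hnonneg i j).lt_iff_ne', or_iff_not_imp_left]
    simp only [mem_univ, true_imp_iff, sq_eq_zero_iff, sub_eq_zero]
  rw [dirichletEnergy, sum_eq_zero_iff_of_nonneg fun i _ => sum_nonneg fun j _ => hterm i j]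
  simp only [sum_eq_zero_iff_of_nonneg fun j _ => hterm _ j, mem_univ, mem_Ioi, true_imp_iff,
    hpair]
  constructor
  · intro h a b hadj
    obtain ⟨hne, hw⟩ := (SimpleGraph.fromRel_adj _ a b).mp hadj
    have hw : 0 < w a b := hw.elim id (hsymm a b ▸ ·)
    rcases hne.lt_or_gt with hlt | hgt
    · exact h a b hlt hw
    · exact (h b a hgt (hsymm a b ▸ hw)).symm
  · exact fun h i j hij hw => h i j ((SimpleGraph.fromRel_adj _ i j).mpr ⟨hij.ne, .inl hw⟩)

end DirichletEnergy

theorem Jpen_eq_zero_iff {n p : ℕ} {γr γc : ℝ} (hγr : 0 < γr) (hγc : 0 < γc)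
    {w : Fin n → Fin n → ℝ} {wt : Fin p → Fin p → ℝ}
    (hsymm : ∀ i j, w i j = w j i) (hnonneg : ∀ i j, 0 ≤ w i j)
    (hsymm' : ∀ i j, wt i j = wt j i) (hnonneg' : ∀ i j, 0 ≤ wt i j)
    (Z : Matrix (Fin n) (Fin p) ℝ) :
    Jpen γr γc w wt Z = 0 ↔
      (∀ a b, (graphOf w).Adj a b → Z a = Z b) ∧ ∀ a b, (graphOf wt).Adj a b → Zᵀ a = Zᵀ b := by
  have hJ : Jpen γr γc w wt Z = γr / 2 * dirichletEnergy w Z + γc / 2 * dirichletEnergy wt Zᵀ :=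
    rfl
  have hrows := dirichletEnergy_nonneg hnonneg Z
  have hcols := dirichletEnergy_nonneg hnonneg' Zᵀ
  rw [hJ, add_eq_zero_iff_of_nonneg (by positivity) (by positivity), mul_eq_zero, mul_eq_zero,
    dirichletEnergy_eq_zero_iff hsymm hnonneg, dirichletEnergy_eq_zero_iff hsymm' hnonneg']
  simp only [hγr.ne', hγc.ne', div_eq_zero_iff, OfNat.ofNat_ne_zero, or_false, false_or]

theorem chi_setOf_eq_apply {n : ℕ} {ρ : Type*} [DecidableEq ρ] (f : Fin n → ρ) (r : ρ)
    (i : Fin n) : chi {v | f v = r} i = if f i = r then 1 else 0 := by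
  by_cases h : f i = r <;> simp [chi, h]

theorem sum_sum_mul_chi_mul_chi {n p : ℕ} {ρ σ : Type*} [Fintype ρ] [DecidableEq ρ]
    [Fintype σ] [DecidableEq σ] (f : Fin n → ρ) (g : Fin p → σ) (μ : ρ → σ → ℝ)
    (i : Fin n) (j : Fin p) :
    ∑ r, ∑ c, μ r c * chi {v | f v = r} i * chi {v | g v = c} j = μ (f i) (g j) := by
  simp [chi_setOf_eq_apply, sum_ite_eq]

theorem Matrix.exists_eq_of_comp_iff {ι κ α β R : Type*} {f : ι → α} {g : κ → β}
    (hf : Function.Surjective f) (hg : Function.Surjective g) (Z : Matrix ι κ R) :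
    (∃ M : α → β → R, Z = of fun i j => M (f i) (g j)) ↔
      (∀ a b, f a = f b → Z a = Z b) ∧ ∀ a b, g a = g b → Zᵀ a = Zᵀ b := by
  constructor
  · rintro ⟨M, rfl⟩
    exact ⟨fun a b h => funext fun j => by simp [h], fun a b h => funext fun i => by simp [h]⟩
  · rintro ⟨hrow, hcol⟩
    refine ⟨fun r c => Z (Function.surjInv hf r) (Function.surjInv hg c), ?_⟩
    ext i j
    calc Z i j = Z i (Function.surjInv hg (g j)) :=
          (congrFun (hcol _ _ (Function.surjInv_eq hg (g j))) i).symm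
      _ = Z (Function.surjInv hf (f i)) (Function.surjInv hg (g j)) :=
          (congrFun (hrow _ _ (Function.surjInv_eq hf (f i))) _).symm

theorem penalty_zero_iff_biclustered_general {n p R C : ℕ} (γr γc : ℝ)
    (hγr : 0 < γr) (hγc : 0 < γc)
    (w : Fin n → Fin n → ℝ) (wt : Fin p → Fin p → ℝ)
    (hsymm : ∀ i j, w i j = w j i) (hnonneg : ∀ i j, 0 ≤ w i j)
    (hsymm' : ∀ i j, wt i j = wt j i) (hnonneg' : ∀ i j, 0 ≤ wt i j)
    (A : Fin R → Set (Fin n))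
    (eA : (graphOf w).ConnectedComponent ≃ Fin R)
    (hA : ∀ r, A r = {v | eA ((graphOf w).connectedComponentMk v) = r})
    (B : Fin C → Set (Fin p))
    (eB : (graphOf wt).ConnectedComponent ≃ Fin C)
    (hB : ∀ c, B c = {v | eB ((graphOf wt).connectedComponentMk v) = c})
    (Z : Matrix (Fin n) (Fin p) ℝ) :
    Jpen γr γc w wt Z = 0 ↔
      ∃ μ : Fin R → Fin C → ℝ,
        Z = Matrix.of fun i j => ∑ r, ∑ c, μ r c * chi (A r) i * chi (B c) j := by
  have hfA : Function.Surjective fun v => eA ((graphOf w).connectedComponentMk v) :=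
    eA.surjective.comp fun c => c.exists_rep
  have hfB : Function.Surjective fun v => eB ((graphOf wt).connectedComponentMk v) :=
    eB.surjective.comp fun c => c.exists_rep
  simp only [hA, hB, sum_sum_mul_chi_mul_chi]
  rw [Jpen_eq_zero_iff hγr hγc hsymm hnonneg hsymm' hnonneg',
    SimpleGraph.forall_adj_imp_eq_iff_forall_connectedComponentMk_eq (f := Z),
    SimpleGraph.forall_adj_imp_eq_iff_forall_connectedComponentMk_eq (f := Zᵀ)]
  refine Iff.trans ?_ (Matrix.exists_eq_of_comp_iff hfA hfB Z).symm
  simp only [EmbeddingLike.apply_eq_iff_eq]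

/-- Proposition 1: for `γr, γc > 0`, `J(Z) = 0` iff
`Z = ∑_{r,c} μ_{rc} χ_{A_r} χ_{B_c}ᵀ` for some scalars `μ_{rc}`. -/
theorem penalty_zero_iff_biclustered {n p R C : ℕ} (γr γc : ℝ)
    (hγr : 0 < γr) (hγc : 0 < γc)
    (w : Fin n → Fin n → ℝ) (wt : Fin p → Fin p → ℝ)
    (hsymm : ∀ i j, w i j = w j i) (hnonneg : ∀ i j, 0 ≤ w i j)
    (hdiag : ∀ i, w i i = 0)
    (hsymm' : ∀ i j, wt i j = wt j i) (hnonneg' : ∀ i j, 0 ≤ wt i j)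
    (hdiag' : ∀ i, wt i i = 0)
    (A : Fin R → Set (Fin n))
    (eA : (graphOf w).ConnectedComponent ≃ Fin R)
    (hA : ∀ r, A r = {v | eA ((graphOf w).connectedComponentMk v) = r})
    (B : Fin C → Set (Fin p))
    (eB : (graphOf wt).ConnectedComponent ≃ Fin C)
    (hB : ∀ c, B c = {v | eB ((graphOf wt).connectedComponentMk v) = c})
    (Z : Matrix (Fin n) (Fin p) ℝ) :
    Jpen γr γc w wt Z = 0 ↔
      ∃ μ : Fin R → Fin C → ℝ,
        Z = Matrix.of fun i j => ∑ r, ∑ c, μ r c * chi (A r) i * chi (B c) j :=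
  penalty_zero_iff_biclustered_general γr γc hγr hγc w wt hsymm hnonneg hsymm' hnonneg' A eA hA B eB
    hB Z
end

section
/- (Theorem 1, existence) For all γ_r ≥ 0 and γ_c ≥ 0, the objective F attains its minimum over ℝ^{n×p}; that is, there exists Z ∈ ℝ^{n×p} with F(Z) ≤ F(Z') for all Z' ∈ ℝ^{n×p}. -/
open Matrix BigOperators Finset

/-- The BMC objective `F(Z) = (1/2) ∑_{(i,j) ∈ Ω} (X i j - Z i j)² + J(Z)`. -/
noncomputable def objF {n p : ℕ} (Ω : Finset (Fin n × Fin p)) (X : Matrix (Fin n) (Fin p) ℝ)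
    (γr γc : ℝ) (w : Fin n → Fin n → ℝ) (wt : Fin p → Fin p → ℝ)
    (Z : Matrix (Fin n) (Fin p) ℝ) : ℝ :=
  (1 / 2) * ∑ q ∈ Ω, (X q.1 q.2 - Z q.1 q.2) ^ 2 + Jpen γr γc w wt Z

attribute [local instance] Matrix.normedAddCommGroup Matrix.normedSpace

namespace BMCaux

variable {n p : ℕ}

/-- The null subspace of the quadratic part of the objective. -/
def Nsub (Ω : Finset (Fin n × Fin p)) (γr γc : ℝ) (w : Fin n → Fin n → ℝ)
    (wt : Fin p → Fin p → ℝ) : Submodule ℝ (Matrix (Fin n) (Fin p) ℝ) where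
  carrier := {d | (∀ q ∈ Ω, d q.1 q.2 = 0) ∧
      (∀ i j, 0 < γr * w i j → ∀ k, d i k = d j k) ∧
      (∀ i j, 0 < γc * wt i j → ∀ k, d k i = d k j)}
  zero_mem' := ⟨fun _ _ => rfl, fun _ _ _ _ => rfl, fun _ _ _ _ => rfl⟩
  add_mem' := by
    rintro a b ⟨ha1, ha2, ha3⟩ ⟨hb1, hb2, hb3⟩
    refine ⟨fun q hq => ?_, fun i j h k => ?_, fun i j h k => ?_⟩
    · show a q.1 q.2 + b q.1 q.2 = 0
      rw [ha1 q hq, hb1 q hq, add_zero]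
    · show a i k + b i k = a j k + b j k
      rw [ha2 i j h k, hb2 i j h k]
    · show a k i + b k i = a k j + b k j
      rw [ha3 i j h k, hb3 i j h k]
  smul_mem' := by
    rintro c a ⟨ha1, ha2, ha3⟩
    refine ⟨fun q hq => ?_, fun i j h k => ?_, fun i j h k => ?_⟩
    · show c * a q.1 q.2 = 0
      rw [ha1 q hq, mul_zero]
    · show c * a i k = c * a j k
      rw [ha2 i j h k]
    · show c * a k i = c * a k j
      rw [ha3 i j h k]

/-- Invariance of the objective under the null subspace. -/
lemma objF_add_mem (Ω : Finset (Fin n × Fin p)) (X : Matrix (Fin n) (Fin p) ℝ)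
    {γr γc : ℝ} (hγr : 0 ≤ γr) (hγc : 0 ≤ γc)
    {w : Fin n → Fin n → ℝ} {wt : Fin p → Fin p → ℝ}
    (hnonneg : ∀ i j, 0 ≤ w i j) (hnonneg' : ∀ i j, 0 ≤ wt i j)
    (Z d : Matrix (Fin n) (Fin p) ℝ) (hd : d ∈ Nsub Ω γr γc w wt) :
    objF Ω X γr γc w wt (Z + d) = objF Ω X γr γc w wt Z := by
  obtain ⟨h1, h2, h3⟩ := hd
  have hA : ∑ q ∈ Ω, (X q.1 q.2 - (Z + d) q.1 q.2) ^ 2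
      = ∑ q ∈ Ω, (X q.1 q.2 - Z q.1 q.2) ^ 2 := by
    refine Finset.sum_congr rfl fun q hq => ?_
    rw [Matrix.add_apply, h1 q hq, add_zero]
  have hB : γr / 2 * ∑ i, ∑ j ∈ Finset.Ioi i, w i j * ∑ k, ((Z + d) i k - (Z + d) j k) ^ 2
      = γr / 2 * ∑ i, ∑ j ∈ Finset.Ioi i, w i j * ∑ k, (Z i k - Z j k) ^ 2 := by
    rcases eq_or_lt_of_le hγr with h | h
    · rw [← h]; norm_num
    · congr 1
      refine Finset.sum_congr rfl fun i _ => Finset.sum_congr rfl fun j _ => ?_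
      rcases eq_or_lt_of_le (hnonneg i j) with hw | hw
      · rw [← hw]; ring
      · have hk := h2 i j (mul_pos h hw)
        congr 1
        refine Finset.sum_congr rfl fun k _ => ?_
        rw [Matrix.add_apply, Matrix.add_apply, hk k]; ring
  have hC : γc / 2 * ∑ i, ∑ j ∈ Finset.Ioi i, wt i j * ∑ k, ((Z + d) k i - (Z + d) k j) ^ 2
      = γc / 2 * ∑ i, ∑ j ∈ Finset.Ioi i, wt i j * ∑ k, (Z k i - Z k j) ^ 2 := by
    rcases eq_or_lt_of_le hγc with h | h
    · rw [← h]; norm_num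
    · congr 1
      refine Finset.sum_congr rfl fun i _ => Finset.sum_congr rfl fun j _ => ?_
      rcases eq_or_lt_of_le (hnonneg' i j) with hw | hw
      · rw [← hw]; ring
      · have hk := h3 i j (mul_pos h hw)
        congr 1
        refine Finset.sum_congr rfl fun k _ => ?_
        rw [Matrix.add_apply, Matrix.add_apply, hk k]; ring
  unfold objF Jpen
  rw [hA, hB, hC]

/-- The quadratic part of the objective. -/
noncomputable def Qf (Ω : Finset (Fin n × Fin p)) (γr γc : ℝ) (w : Fin n → Fin n → ℝ)
    (wt : Fin p → Fin p → ℝ) (Z : Matrix (Fin n) (Fin p) ℝ) : ℝ :=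
  (1 / 2) * ∑ q ∈ Ω, (Z q.1 q.2) ^ 2 + Jpen γr γc w wt Z

lemma Jpen_nonneg {γr γc : ℝ} (hγr : 0 ≤ γr) (hγc : 0 ≤ γc)
    {w : Fin n → Fin n → ℝ} {wt : Fin p → Fin p → ℝ}
    (hnonneg : ∀ i j, 0 ≤ w i j) (hnonneg' : ∀ i j, 0 ≤ wt i j)
    (Z : Matrix (Fin n) (Fin p) ℝ) : 0 ≤ Jpen γr γc w wt Z := by
  refine add_nonneg ?_ ?_
  · exact mul_nonneg (by positivity) (Finset.sum_nonneg fun i _ =>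
      Finset.sum_nonneg fun j _ => mul_nonneg (hnonneg i j)
        (Finset.sum_nonneg fun k _ => sq_nonneg _))
  · exact mul_nonneg (by positivity) (Finset.sum_nonneg fun i _ =>
      Finset.sum_nonneg fun j _ => mul_nonneg (hnonneg' i j)
        (Finset.sum_nonneg fun k _ => sq_nonneg _))

lemma Qf_nonneg (Ω : Finset (Fin n × Fin p)) {γr γc : ℝ} (hγr : 0 ≤ γr) (hγc : 0 ≤ γc)
    {w : Fin n → Fin n → ℝ} {wt : Fin p → Fin p → ℝ}
    (hnonneg : ∀ i j, 0 ≤ w i j) (hnonneg' : ∀ i j, 0 ≤ wt i j)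
    (Z : Matrix (Fin n) (Fin p) ℝ) : 0 ≤ Qf Ω γr γc w wt Z :=
  add_nonneg (mul_nonneg (by norm_num) (Finset.sum_nonneg fun q _ => sq_nonneg _))
    (Jpen_nonneg hγr hγc hnonneg hnonneg' Z)

/-- A symmetric nonnegative weighted sum over `i < j` being zero kills each weighted term. -/
lemma sumpair_zero {m : ℕ} {v : Fin m → Fin m → ℝ} (hs : ∀ i j, v i j = v j i)
    (hn : ∀ i j, 0 ≤ v i j) (hd : ∀ i, v i i = 0)
    {f : Fin m → Fin m → ℝ} (hf : ∀ i j, 0 ≤ f i j) (hfs : ∀ i j, f i j = f j i)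
    (h0 : ∑ i, ∑ j ∈ Finset.Ioi i, v i j * f i j = 0) :
    ∀ i j, 0 < v i j → f i j = 0 := by
  have hterm : ∀ i ∈ Finset.univ, ∀ j ∈ Finset.Ioi i, v i j * f i j = 0 := by
    have h1 : ∀ i ∈ (Finset.univ : Finset (Fin m)),
        0 ≤ ∑ j ∈ Finset.Ioi i, v i j * f i j := fun i _ =>
      Finset.sum_nonneg fun j _ => mul_nonneg (hn i j) (hf i j)
    have h2 := (Finset.sum_eq_zero_iff_of_nonneg h1).mp h0
    intro i hi j hj
    exact (Finset.sum_eq_zero_iff_of_nonneg fun j _ =>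
      mul_nonneg (hn i j) (hf i j)).mp (h2 i hi) j hj
  intro i j hv
  rcases lt_trichotomy i j with h | h | h
  · have := hterm i (Finset.mem_univ i) j (Finset.mem_Ioi.mpr h)
    exact (mul_eq_zero.mp this).resolve_left (ne_of_gt hv)
  · exact absurd hv (by rw [h, hd j]; exact lt_irrefl 0)
  · have hv' : 0 < v j i := by rw [← hs i j]; exact hv
    have := hterm j (Finset.mem_univ j) i (Finset.mem_Ioi.mpr h)
    rw [hfs i j]
    exact (mul_eq_zero.mp this).resolve_left (ne_of_gt hv')

lemma Qf_eq_zero_mem (Ω : Finset (Fin n × Fin p)) {γr γc : ℝ} (hγr : 0 ≤ γr) (hγc : 0 ≤ γc)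
    {w : Fin n → Fin n → ℝ} {wt : Fin p → Fin p → ℝ}
    (hsymm : ∀ i j, w i j = w j i) (hnonneg : ∀ i j, 0 ≤ w i j) (hdiag : ∀ i, w i i = 0)
    (hsymm' : ∀ i j, wt i j = wt j i) (hnonneg' : ∀ i j, 0 ≤ wt i j) (hdiag' : ∀ i, wt i i = 0)
    (Z : Matrix (Fin n) (Fin p) ℝ) (hz : Qf Ω γr γc w wt Z = 0) :
    Z ∈ Nsub Ω γr γc w wt := by
  have hA0 : 0 ≤ (1 / 2 : ℝ) * ∑ q ∈ Ω, (Z q.1 q.2) ^ 2 :=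
    mul_nonneg (by norm_num) (Finset.sum_nonneg fun q _ => sq_nonneg _)
  have hB0 : 0 ≤ γr / 2 * ∑ i, ∑ j ∈ Finset.Ioi i, w i j * ∑ k, (Z i k - Z j k) ^ 2 :=
    mul_nonneg (by positivity) (Finset.sum_nonneg fun i _ =>
      Finset.sum_nonneg fun j _ => mul_nonneg (hnonneg i j)
        (Finset.sum_nonneg fun k _ => sq_nonneg _))
  have hC0 : 0 ≤ γc / 2 * ∑ i, ∑ j ∈ Finset.Ioi i, wt i j * ∑ k, (Z k i - Z k j) ^ 2 :=
    mul_nonneg (by positivity) (Finset.sum_nonneg fun i _ =>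
      Finset.sum_nonneg fun j _ => mul_nonneg (hnonneg' i j)
        (Finset.sum_nonneg fun k _ => sq_nonneg _))
  rw [Qf, Jpen] at hz
  have hA : (1 / 2 : ℝ) * ∑ q ∈ Ω, (Z q.1 q.2) ^ 2 = 0 := by linarith
  have hB : γr / 2 * ∑ i, ∑ j ∈ Finset.Ioi i, w i j * ∑ k, (Z i k - Z j k) ^ 2 = 0 := by
    linarith
  have hC : γc / 2 * ∑ i, ∑ j ∈ Finset.Ioi i, wt i j * ∑ k, (Z k i - Z k j) ^ 2 = 0 := by
    linarith
  refine ⟨?_, ?_, ?_⟩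
  · intro q hq
    have hS : ∑ q ∈ Ω, (Z q.1 q.2) ^ 2 = 0 := by linarith
    have := (Finset.sum_eq_zero_iff_of_nonneg fun q _ => sq_nonneg (Z q.1 q.2)).mp hS q hq
    exact pow_eq_zero_iff (two_ne_zero) |>.mp this
  · intro i j h k
    have hγ : 0 < γr := by
      rcases eq_or_lt_of_le hγr with h' | h'
      · exfalso; rw [← h', zero_mul] at h; exact lt_irrefl 0 h
      · exact h'
    have hw : 0 < w i j := by
      rcases eq_or_lt_of_le (hnonneg i j) with h' | h'
      · exfalso; rw [← h', mul_zero] at h; exact lt_irrefl 0 h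
      · exact h'
    have hS : ∑ i, ∑ j ∈ Finset.Ioi i, w i j * ∑ k, (Z i k - Z j k) ^ 2 = 0 := by
      rcases mul_eq_zero.mp hB with h' | h'
      · exact absurd h' (by positivity)
      · exact h'
    have hfz := sumpair_zero hsymm hnonneg hdiag
      (f := fun i j => ∑ k, (Z i k - Z j k) ^ 2)
      (fun i j => Finset.sum_nonneg fun k _ => sq_nonneg _)
      (fun i j => Finset.sum_congr rfl fun k _ => by ring) hS i j hw
    have := (Finset.sum_eq_zero_iff_of_nonneg fun k _ =>
      sq_nonneg (Z i k - Z j k)).mp hfz k (Finset.mem_univ k)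
    have := pow_eq_zero_iff (two_ne_zero) |>.mp this
    linarith
  · intro i j h k
    have hγ : 0 < γc := by
      rcases eq_or_lt_of_le hγc with h' | h'
      · exfalso; rw [← h', zero_mul] at h; exact lt_irrefl 0 h
      · exact h'
    have hw : 0 < wt i j := by
      rcases eq_or_lt_of_le (hnonneg' i j) with h' | h'
      · exfalso; rw [← h', mul_zero] at h; exact lt_irrefl 0 h
      · exact h'
    have hS : ∑ i, ∑ j ∈ Finset.Ioi i, wt i j * ∑ k, (Z k i - Z k j) ^ 2 = 0 := by
      rcases mul_eq_zero.mp hC with h' | h'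
      · exact absurd h' (by positivity)
      · exact h'
    have hfz := sumpair_zero hsymm' hnonneg' hdiag'
      (f := fun i j => ∑ k, (Z k i - Z k j) ^ 2)
      (fun i j => Finset.sum_nonneg fun k _ => sq_nonneg _)
      (fun i j => Finset.sum_congr rfl fun k _ => by ring) hS i j hw
    have := (Finset.sum_eq_zero_iff_of_nonneg fun k _ =>
      sq_nonneg (Z k i - Z k j)).mp hfz k (Finset.mem_univ k)
    have := pow_eq_zero_iff (two_ne_zero) |>.mp this
    linarith

lemma Qf_smul (Ω : Finset (Fin n × Fin p)) (γr γc : ℝ) (w : Fin n → Fin n → ℝ)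
    (wt : Fin p → Fin p → ℝ) (t : ℝ) (Z : Matrix (Fin n) (Fin p) ℝ) :
    Qf Ω γr γc w wt (t • Z) = t ^ 2 * Qf Ω γr γc w wt Z := by
  have hS : ∑ q ∈ Ω, ((t • Z) q.1 q.2) ^ 2 = t ^ 2 * ∑ q ∈ Ω, (Z q.1 q.2) ^ 2 := by
    rw [Finset.mul_sum]
    refine Finset.sum_congr rfl fun q _ => ?_
    rw [Matrix.smul_apply, smul_eq_mul]; ring
  have hB : ∑ i, ∑ j ∈ Finset.Ioi i, w i j * ∑ k, ((t • Z) i k - (t • Z) j k) ^ 2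
      = t ^ 2 * ∑ i, ∑ j ∈ Finset.Ioi i, w i j * ∑ k, (Z i k - Z j k) ^ 2 := by
    rw [Finset.mul_sum]
    refine Finset.sum_congr rfl fun i _ => ?_
    rw [Finset.mul_sum]
    refine Finset.sum_congr rfl fun j _ => ?_
    have : ∑ k, ((t • Z) i k - (t • Z) j k) ^ 2 = t ^ 2 * ∑ k, (Z i k - Z j k) ^ 2 := by
      rw [Finset.mul_sum]
      refine Finset.sum_congr rfl fun k _ => ?_
      rw [Matrix.smul_apply, Matrix.smul_apply, smul_eq_mul, smul_eq_mul]; ring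
    rw [this]; ring
  have hC : ∑ i, ∑ j ∈ Finset.Ioi i, wt i j * ∑ k, ((t • Z) k i - (t • Z) k j) ^ 2
      = t ^ 2 * ∑ i, ∑ j ∈ Finset.Ioi i, wt i j * ∑ k, (Z k i - Z k j) ^ 2 := by
    rw [Finset.mul_sum]
    refine Finset.sum_congr rfl fun i _ => ?_
    rw [Finset.mul_sum]
    refine Finset.sum_congr rfl fun j _ => ?_
    have : ∑ k, ((t • Z) k i - (t • Z) k j) ^ 2 = t ^ 2 * ∑ k, (Z k i - Z k j) ^ 2 := by
      rw [Finset.mul_sum]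
      refine Finset.sum_congr rfl fun k _ => ?_
      rw [Matrix.smul_apply, Matrix.smul_apply, smul_eq_mul, smul_eq_mul]; ring
    rw [this]; ring
  rw [Qf, Qf, Jpen, Jpen, hS, hB, hC]; ring

lemma objF_lower (Ω : Finset (Fin n × Fin p)) (X : Matrix (Fin n) (Fin p) ℝ)
    {γr γc : ℝ} (hγr : 0 ≤ γr) (hγc : 0 ≤ γc)
    {w : Fin n → Fin n → ℝ} {wt : Fin p → Fin p → ℝ}
    (hnonneg : ∀ i j, 0 ≤ w i j) (hnonneg' : ∀ i j, 0 ≤ wt i j)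
    (Z : Matrix (Fin n) (Fin p) ℝ) :
    (1 / 2) * Qf Ω γr γc w wt Z - ∑ q ∈ Ω, (X q.1 q.2) ^ 2 ≤ objF Ω X γr γc w wt Z := by
  have h1 : ∑ q ∈ Ω, ((1 / 4 : ℝ) * (Z q.1 q.2) ^ 2)
      ≤ ∑ q ∈ Ω, ((1 / 2 : ℝ) * (X q.1 q.2 - Z q.1 q.2) ^ 2 + (X q.1 q.2) ^ 2) :=
    Finset.sum_le_sum fun q _ => by nlinarith [sq_nonneg (Z q.1 q.2 - 2 * X q.1 q.2)]
  rw [Finset.sum_add_distrib, ← Finset.mul_sum, ← Finset.mul_sum] at h1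
  have hJ := Jpen_nonneg hγr hγc hnonneg hnonneg' Z
  rw [Qf, objF]
  linarith

lemma objF_continuous (Ω : Finset (Fin n × Fin p)) (X : Matrix (Fin n) (Fin p) ℝ)
    (γr γc : ℝ) (w : Fin n → Fin n → ℝ) (wt : Fin p → Fin p → ℝ) :
    Continuous (objF Ω X γr γc w wt) := by
  have he : ∀ (i : Fin n) (j : Fin p), Continuous fun Z : Matrix (Fin n) (Fin p) ℝ => Z i j :=
    fun i j => (continuous_apply j).comp (continuous_apply i)
  unfold objF Jpen
  refine (continuous_const.mul (continuous_finset_sum _ fun q _ =>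
    (continuous_const.sub (he q.1 q.2)).pow 2)).add (Continuous.add ?_ ?_)
  · exact continuous_const.mul (continuous_finset_sum _ fun i _ =>
      continuous_finset_sum _ fun j _ => continuous_const.mul
        (continuous_finset_sum _ fun k _ => ((he i k).sub (he j k)).pow 2))
  · exact continuous_const.mul (continuous_finset_sum _ fun i _ =>
      continuous_finset_sum _ fun j _ => continuous_const.mul
        (continuous_finset_sum _ fun k _ => ((he k i).sub (he k j)).pow 2))

lemma Qf_continuous (Ω : Finset (Fin n × Fin p)) (γr γc : ℝ) (w : Fin n → Fin n → ℝ)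
    (wt : Fin p → Fin p → ℝ) : Continuous (Qf Ω γr γc w wt) := by
  have he : ∀ (i : Fin n) (j : Fin p), Continuous fun Z : Matrix (Fin n) (Fin p) ℝ => Z i j :=
    fun i j => (continuous_apply j).comp (continuous_apply i)
  unfold Qf Jpen
  refine (continuous_const.mul (continuous_finset_sum _ fun q _ =>
    (he q.1 q.2).pow 2)).add (Continuous.add ?_ ?_)
  · exact continuous_const.mul (continuous_finset_sum _ fun i _ =>
      continuous_finset_sum _ fun j _ => continuous_const.mul
        (continuous_finset_sum _ fun k _ => ((he i k).sub (he j k)).pow 2))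
  · exact continuous_const.mul (continuous_finset_sum _ fun i _ =>
      continuous_finset_sum _ fun j _ => continuous_const.mul
        (continuous_finset_sum _ fun k _ => ((he k i).sub (he k j)).pow 2))

end BMCaux
open Matrix BigOperators Finset BMCaux

set_option maxHeartbeats 1000000 in
/-- Theorem 1, existence: for all `γr, γc ≥ 0` the BMC objective `F`
attains its minimum over `ℝ^{n×p}`. -/
theorem bmc_minimizer_exists {n p : ℕ} (Ω : Finset (Fin n × Fin p))
    (X : Matrix (Fin n) (Fin p) ℝ) (γr γc : ℝ) (hγr : 0 ≤ γr) (hγc : 0 ≤ γc)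
    (w : Fin n → Fin n → ℝ) (wt : Fin p → Fin p → ℝ)
    (hsymm : ∀ i j, w i j = w j i) (hnonneg : ∀ i j, 0 ≤ w i j)
    (hdiag : ∀ i, w i i = 0)
    (hsymm' : ∀ i j, wt i j = wt j i) (hnonneg' : ∀ i j, 0 ≤ wt i j)
    (hdiag' : ∀ i, wt i i = 0) :
    ∃ Z : Matrix (Fin n) (Fin p) ℝ,
      ∀ Z' : Matrix (Fin n) (Fin p) ℝ, objF Ω X γr γc w wt Z ≤ objF Ω X γr γc w wt Z' := by
  classical
  set F := objF Ω X γr γc w wt with hF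
  set Q := Qf Ω γr γc w wt with hQ
  set N := Nsub Ω γr γc w wt with hN
  obtain ⟨W, hW⟩ := N.exists_isCompl
  have hFinv : ∀ Z d : Matrix (Fin n) (Fin p) ℝ, d ∈ N → F (Z + d) = F Z :=
    fun Z d hd => objF_add_mem Ω X hγr hγc hnonneg hnonneg' Z d hd
  by_cases hbot : W = ⊥
  · -- N = ⊤, so F is constant
    have hNtop : N = ⊤ := by
      have := hW.sup_eq_top
      rwa [hbot, sup_bot_eq] at this
    refine ⟨0, fun Z' => ?_⟩
    have h0 : F (0 + Z') = F 0 := hFinv 0 Z' (by rw [hNtop]; trivial)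
    rw [zero_add] at h0
    rw [h0]
  · -- W ≠ ⊥
    obtain ⟨z0, hz0W, hz0⟩ := Submodule.ne_bot_iff W |>.mp hbot
    set π := W.projectionOnto N hW.symm with hπ
    have hker : ∀ Z' : Matrix (Fin n) (Fin p) ℝ, Z' - (π Z' : Matrix (Fin n) (Fin p) ℝ) ∈ N := by
      intro Z'
      refine (Submodule.linearProjOfIsCompl_apply_eq_zero_iff hW.symm).mp ?_
      rw [map_sub, Submodule.linearProjOfIsCompl_apply_left hW.symm (π Z'), sub_self]
    have hproj : ∀ Z' : Matrix (Fin n) (Fin p) ℝ,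
        F Z' = F (π Z' : Matrix (Fin n) (Fin p) ℝ) := by
      intro Z'
      have h := hFinv (π Z' : Matrix (Fin n) (Fin p) ℝ)
        (Z' - (π Z' : Matrix (Fin n) (Fin p) ℝ)) (hker Z')
      rw [add_sub_cancel] at h
      exact h
    -- compact unit sphere in W
    have hWclosed : IsClosed (W : Set (Matrix (Fin n) (Fin p) ℝ)) :=
      W.closed_of_finiteDimensional
    set S : Set (Matrix (Fin n) (Fin p) ℝ) :=
      (W : Set (Matrix (Fin n) (Fin p) ℝ)) ∩ Metric.sphere 0 1 with hSdef
    have hScompact : IsCompact S :=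
      (isCompact_sphere (0 : Matrix (Fin n) (Fin p) ℝ) 1).inter_left hWclosed
    have hSne : S.Nonempty := by
      refine ⟨‖z0‖⁻¹ • z0, W.smul_mem _ hz0W, ?_⟩
      rw [Metric.mem_sphere, dist_zero_right]
      exact norm_smul_inv_norm (𝕜 := ℝ) hz0
    obtain ⟨u, huS, humin⟩ := hScompact.exists_isMinOn hSne
      (Qf_continuous Ω γr γc w wt).continuousOn
    set c := Q u with hc
    have hu1 : ‖u‖ = 1 := by
      have h := huS.2
      rwa [Metric.mem_sphere, dist_zero_right] at h
    have hcpos : 0 < c := by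
      rcases (Qf_nonneg Ω hγr hγc hnonneg hnonneg' u).lt_or_eq with h | h
      · exact h
      · exfalso
        have huN : u ∈ N := Qf_eq_zero_mem Ω hγr hγc hsymm hnonneg hdiag
          hsymm' hnonneg' hdiag' u h.symm
        have hu0 : u = 0 := Submodule.disjoint_def.mp hW.disjoint u huN huS.1
        rw [hu0, norm_zero] at hu1
        norm_num at hu1
    have hQlb : ∀ z : Matrix (Fin n) (Fin p) ℝ, z ∈ W → c * ‖z‖ ^ 2 ≤ Q z := by
      intro z hz
      by_cases hz0' : z = 0
      · have hQ0 : Q (0 : Matrix (Fin n) (Fin p) ℝ) = 0 := by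
          rw [hQ, show (0 : Matrix (Fin n) (Fin p) ℝ) = (0 : ℝ) • (0 : Matrix (Fin n) (Fin p) ℝ)
            from (zero_smul ℝ 0).symm, Qf_smul]
          ring
        rw [hz0', hQ0, norm_zero]
        norm_num
      · have hn : (0 : ℝ) < ‖z‖ := norm_pos_iff.mpr hz0'
        have hmem : ‖z‖⁻¹ • z ∈ S := by
          refine ⟨W.smul_mem _ hz, ?_⟩
          rw [Metric.mem_sphere, dist_zero_right]
          exact norm_smul_inv_norm (𝕜 := ℝ) hz0'
        have h1 : c ≤ Q (‖z‖⁻¹ • z) := isMinOn_iff.mp humin _ hmem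
        have h2 : Q (‖z‖⁻¹ • z) = (‖z‖⁻¹) ^ 2 * Q z := Qf_smul Ω γr γc w wt _ z
        rw [h2] at h1
        have h3 := mul_le_mul_of_nonneg_right h1 (sq_nonneg ‖z‖)
        calc c * ‖z‖ ^ 2 ≤ (‖z‖⁻¹) ^ 2 * Q z * ‖z‖ ^ 2 := h3
          _ = Q z := by field_simp
    set CX := ∑ q ∈ Ω, (X q.1 q.2) ^ 2 with hCX
    have hFlb : ∀ z : Matrix (Fin n) (Fin p) ℝ, z ∈ W → c / 2 * ‖z‖ ^ 2 - CX ≤ F z := by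
      intro z hz
      have h1 := objF_lower Ω X hγr hγc hnonneg hnonneg' z
      have h2 := hQlb z hz
      rw [← hQ, ← hF, ← hCX] at h1
      linarith
    set s := Real.sqrt (2 * (F 0 + CX) / c) with hs
    set R := s + 1 with hR
    have hs0 : 0 ≤ s := Real.sqrt_nonneg _
    have hsx : 2 * (F 0 + CX) / c ≤ s ^ 2 := by
      rcases le_or_gt 0 (2 * (F 0 + CX) / c) with h | h
      · rw [hs, Real.sq_sqrt h]
      · exact le_of_lt (lt_of_lt_of_le h (sq_nonneg s))
    set K : Set (Matrix (Fin n) (Fin p) ℝ) :=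
      (W : Set (Matrix (Fin n) (Fin p) ℝ)) ∩ Metric.closedBall 0 R with hKdef
    have hKcompact : IsCompact K :=
      (isCompact_closedBall (0 : Matrix (Fin n) (Fin p) ℝ) R).inter_left hWclosed
    have h0K : (0 : Matrix (Fin n) (Fin p) ℝ) ∈ K := by
      refine ⟨W.zero_mem, ?_⟩
      rw [Metric.mem_closedBall, dist_self]
      linarith
    obtain ⟨Z, hZK, hZmin⟩ := hKcompact.exists_isMinOn ⟨0, h0K⟩
      (objF_continuous Ω X γr γc w wt).continuousOn
    have hZmin' : ∀ x ∈ K, F Z ≤ F x := by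
      rw [hF]; exact fun x hx => isMinOn_iff.mp hZmin x hx
    clear_value F Q N π c CX s R
    refine ⟨Z, fun Z' => ?_⟩
    rw [hproj Z']
    by_cases hRle : ‖(π Z' : Matrix (Fin n) (Fin p) ℝ)‖ ≤ R
    · exact hZmin' _ ⟨(π Z').2, by rwa [Metric.mem_closedBall, dist_zero_right]⟩
    · push_neg at hRle
      set r := ‖(π Z' : Matrix (Fin n) (Fin p) ℝ)‖ with hrdef
      clear_value r
      have h1 : F Z ≤ F 0 := hZmin' _ h0K
      have h2 : c / 2 * r ^ 2 - CX
          ≤ F (π Z' : Matrix (Fin n) (Fin p) ℝ) := by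
        have := hFlb _ (π Z').2
        rwa [← hrdef] at this
      have h3 : F 0 < c / 2 * r ^ 2 - CX := by
        have hx : 2 * (F 0 + CX) ≤ c * s ^ 2 := by
          have h4 := mul_le_mul_of_nonneg_left hsx (le_of_lt hcpos)
          rwa [mul_div_cancel₀ _ (ne_of_gt hcpos)] at h4
        have hr : s + 1 < r := by rw [← hR]; exact hRle
        have hr2 : (s + 1) ^ 2 < r ^ 2 := by nlinarith
        have h5 : c * (s + 1) ^ 2 < c * r ^ 2 :=
          mul_lt_mul_of_pos_left hr2 hcpos
        have h6 : 0 ≤ c * s := mul_nonneg hcpos.le hs0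
        nlinarith [hx, h5, h6, hcpos]
      linarith
end

section
/- (Theorem 1, non-uniqueness) Suppose γ_r > 0 and γ_c > 0 and Assumption 1 fails. Then the set of global minimizers of F over ℝ^{n×p} is infinite. -/
open Matrix BigOperators Finset

abbrev BmcIdx (n p : ℕ) := ((Fin n × Fin p) ⊕ (Fin n × Fin n × Fin p)) ⊕ (Fin p × Fin p × Fin n)

noncomputable def bmcFun {n p : ℕ} (Ω : Finset (Fin n × Fin p)) (γr γc : ℝ)
    (w : Fin n → Fin n → ℝ) (wt : Fin p → Fin p → ℝ)
    (Z : Matrix (Fin n) (Fin p) ℝ) : BmcIdx n p → ℝ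
  | .inl (.inl q) => (if q ∈ Ω then (1:ℝ) else 0) * Z q.1 q.2
  | .inl (.inr (i, j, k)) => (if i < j then Real.sqrt (γr * w i j) else 0) * (Z i k - Z j k)
  | .inr (i, j, k) => (if i < j then Real.sqrt (γc * wt i j) else 0) * (Z k i - Z k j)

noncomputable def bmcL {n p : ℕ} (Ω : Finset (Fin n × Fin p)) (γr γc : ℝ)
    (w : Fin n → Fin n → ℝ) (wt : Fin p → Fin p → ℝ) :
    Matrix (Fin n) (Fin p) ℝ →ₗ[ℝ] EuclideanSpace ℝ (BmcIdx n p) where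
  toFun Z := WithLp.toLp 2 (bmcFun Ω γr γc w wt Z)
  map_add' Z W := by
    ext q
    rcases q with (⟨q⟩ | ⟨i, j, k⟩) | ⟨i, j, k⟩ <;>
      simp only [bmcFun, Matrix.add_apply, PiLp.add_apply, PiLp.toLp_apply] <;> ring
  map_smul' c Z := by
    ext q
    rcases q with (⟨q⟩ | ⟨i, j, k⟩) | ⟨i, j, k⟩ <;>
      simp only [bmcFun, Matrix.smul_apply, PiLp.smul_apply, smul_eq_mul, PiLp.toLp_apply,
        RingHom.id_apply] <;> ring

noncomputable def bmcV {n p : ℕ} (Ω : Finset (Fin n × Fin p))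
    (X : Matrix (Fin n) (Fin p) ℝ) : EuclideanSpace ℝ (BmcIdx n p) :=
  WithLp.toLp 2 fun (q : BmcIdx n p) => match q with
  | .inl (.inl q) => (if q ∈ Ω then (1:ℝ) else 0) * X q.1 q.2
  | _ => 0

lemma eunorm_sq {ι : Type*} [Fintype ι] (x : EuclideanSpace ℝ ι) :
    ‖x‖ ^ 2 = ∑ q, x q ^ 2 := by
  rw [EuclideanSpace.norm_eq, Real.sq_sqrt (by positivity)]
  simp [sq_abs]

lemma objF_eq_norm {n p : ℕ} (Ω : Finset (Fin n × Fin p)) (X : Matrix (Fin n) (Fin p) ℝ)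
    (γr γc : ℝ) (hγr : 0 ≤ γr) (hγc : 0 ≤ γc)
    (w : Fin n → Fin n → ℝ) (wt : Fin p → Fin p → ℝ)
    (hnonneg : ∀ i j, 0 ≤ w i j) (hnonneg' : ∀ i j, 0 ≤ wt i j)
    (Z : Matrix (Fin n) (Fin p) ℝ) :
    objF Ω X γr γc w wt Z = (1/2) * ‖bmcL Ω γr γc w wt Z - bmcV Ω X‖ ^ 2 := by
  rw [eunorm_sq]
  have hsum : ∑ q, ((bmcL Ω γr γc w wt Z - bmcV Ω X) q) ^ 2
      = (∑ q ∈ Ω, (X q.1 q.2 - Z q.1 q.2) ^ 2)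
        + γr * ∑ i, ∑ j ∈ Finset.Ioi i, w i j * ∑ k, (Z i k - Z j k) ^ 2
        + γc * ∑ i, ∑ j ∈ Finset.Ioi i, wt i j * ∑ k, (Z k i - Z k j) ^ 2 := by
    have happ : ∀ q, (bmcL Ω γr γc w wt Z - bmcV Ω X) q
        = bmcFun Ω γr γc w wt Z q - bmcV Ω X q := fun q => rfl
    simp only [happ]
    rw [Fintype.sum_sum_type, Fintype.sum_sum_type]
    congr 1
    · congr 1
      · -- data part
        have : ∀ q : Fin n × Fin p,
            (bmcFun Ω γr γc w wt Z (.inl (.inl q)) - bmcV Ω X (.inl (.inl q))) ^ 2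
            = if q ∈ Ω then (X q.1 q.2 - Z q.1 q.2) ^ 2 else 0 := by
          intro q
          simp only [bmcFun, bmcV]
          split <;> ring
        rw [Finset.sum_congr rfl fun q _ => this q, Finset.sum_ite_mem, Finset.univ_inter]
      · -- row part
        have key : ∀ i j : Fin n, ∀ k : Fin p,
            (bmcFun Ω γr γc w wt Z (.inl (.inr (i, j, k))) - bmcV Ω X (.inl (.inr (i, j, k)))) ^ 2
            = (if i < j then γr * w i j else 0) * (Z i k - Z j k) ^ 2 := by
          intro i j k
          simp only [bmcFun, bmcV, sub_zero]
          split_ifs with h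
          · rw [mul_pow, Real.sq_sqrt (mul_nonneg hγr (hnonneg i j))]
          · ring
        calc ∑ x : Fin n × Fin n × Fin p,
              (bmcFun Ω γr γc w wt Z (.inl (.inr x)) - bmcV Ω X (.inl (.inr x))) ^ 2
            = ∑ i, ∑ j, ∑ k, (if i < j then γr * w i j else 0) * (Z i k - Z j k) ^ 2 := by
              rw [Fintype.sum_prod_type]
              refine Finset.sum_congr rfl fun i _ => ?_
              rw [Fintype.sum_prod_type]
              exact Finset.sum_congr rfl fun j _ => Finset.sum_congr rfl fun k _ => key i j k
          _ = γr * ∑ i, ∑ j ∈ Finset.Ioi i, w i j * ∑ k, (Z i k - Z j k) ^ 2 := by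
              rw [Finset.mul_sum]
              refine Finset.sum_congr rfl fun i _ => ?_
              rw [Finset.mul_sum]
              rw [show (Finset.Ioi i) = Finset.univ.filter (fun j => i < j) by
                ext j; simp [Finset.mem_Ioi]]
              rw [Finset.sum_filter]
              refine Finset.sum_congr rfl fun j _ => ?_
              split_ifs with h
              · simp only [Finset.mul_sum]
                exact Finset.sum_congr rfl fun k _ => by ring
              · simp
    · -- column part
      have key : ∀ i j : Fin p, ∀ k : Fin n,
          (bmcFun Ω γr γc w wt Z (.inr (i, j, k)) - bmcV Ω X (.inr (i, j, k))) ^ 2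
          = (if i < j then γc * wt i j else 0) * (Z k i - Z k j) ^ 2 := by
        intro i j k
        simp only [bmcFun, bmcV, sub_zero]
        split_ifs with h
        · rw [mul_pow, Real.sq_sqrt (mul_nonneg hγc (hnonneg' i j))]
        · ring
      calc ∑ x : Fin p × Fin p × Fin n,
            (bmcFun Ω γr γc w wt Z (.inr x) - bmcV Ω X (.inr x)) ^ 2
          = ∑ i, ∑ j, ∑ k, (if i < j then γc * wt i j else 0) * (Z k i - Z k j) ^ 2 := by
            rw [Fintype.sum_prod_type]
            refine Finset.sum_congr rfl fun i _ => ?_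
            rw [Fintype.sum_prod_type]
            exact Finset.sum_congr rfl fun j _ => Finset.sum_congr rfl fun k _ => key i j k
        _ = γc * ∑ i, ∑ j ∈ Finset.Ioi i, wt i j * ∑ k, (Z k i - Z k j) ^ 2 := by
            rw [Finset.mul_sum]
            refine Finset.sum_congr rfl fun i _ => ?_
            rw [Finset.mul_sum]
            rw [show (Finset.Ioi i) = Finset.univ.filter (fun j => i < j) by
              ext j; simp [Finset.mem_Ioi]]
            rw [Finset.sum_filter]
            refine Finset.sum_congr rfl fun j _ => ?_
            split_ifs with h
            · simp only [Finset.mul_sum]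
              exact Finset.sum_congr rfl fun k _ => by ring
            · simp
  rw [hsum, objF, Jpen]
  ring

lemma exists_min_norm' {E F : Type*} [AddCommGroup E] [NormedAddCommGroup F]
    [InnerProductSpace ℝ F] [FiniteDimensional ℝ F] [Module ℝ E]
    (L : E →ₗ[ℝ] F) (v : F) : ∃ Z₀ : E, ∀ Z' : E, ‖L Z₀ - v‖ ≤ ‖L Z' - v‖ := by
  set K := LinearMap.range L with hK
  obtain ⟨Z₀, hZ₀⟩ : ∃ Z₀, L Z₀ = (K.orthogonalProjectionOnto v : F) :=
    (K.orthogonalProjectionOnto v).2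
  refine ⟨Z₀, fun Z' => ?_⟩
  rw [hZ₀]
  have h1 : ‖v - (K.orthogonalProjectionOnto v : F)‖ ≤ ‖v - L Z'‖ := by
    rw [← Submodule.starProjection_apply, Submodule.starProjection_minimal]
    exact ciInf_le ⟨0, fun x hx => by obtain ⟨y, rfl⟩ := hx; positivity⟩ (⟨L Z', ⟨Z', rfl⟩⟩ : K)
  rw [norm_sub_rev, norm_sub_rev (L Z')]
  exact h1

lemma bmc_exists_min {n p : ℕ} (Ω : Finset (Fin n × Fin p)) (X : Matrix (Fin n) (Fin p) ℝ)
    (γr γc : ℝ) (hγr : 0 ≤ γr) (hγc : 0 ≤ γc)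
    (w : Fin n → Fin n → ℝ) (wt : Fin p → Fin p → ℝ)
    (hnonneg : ∀ i j, 0 ≤ w i j) (hnonneg' : ∀ i j, 0 ≤ wt i j) :
    ∃ Z₀ : Matrix (Fin n) (Fin p) ℝ, ∀ Z' : Matrix (Fin n) (Fin p) ℝ,
      objF Ω X γr γc w wt Z₀ ≤ objF Ω X γr γc w wt Z' := by
  obtain ⟨Z₀, hZ₀⟩ := exists_min_norm' (bmcL Ω γr γc w wt) (bmcV Ω X)
  refine ⟨Z₀, fun Z' => ?_⟩
  rw [objF_eq_norm Ω X γr γc hγr hγc w wt hnonneg hnonneg',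
    objF_eq_norm Ω X γr γc hγr hγc w wt hnonneg hnonneg']
  have := pow_le_pow_left₀ (norm_nonneg _) (hZ₀ Z') 2
  linarith

lemma chi_congr {n R : ℕ} {w : Fin n → Fin n → ℝ} (A : Fin R → Set (Fin n))
    (eA : (graphOf w).ConnectedComponent ≃ Fin R)
    (hA : ∀ r, A r = {v | eA ((graphOf w).connectedComponentMk v) = r}) (r : Fin R)
    {i j : Fin n} (hij : i ≠ j) (hw : 0 < w i j) : chi (A r) i = chi (A r) j := by
  have hadj : (graphOf w).Adj i j := ⟨hij, Or.inl hw⟩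
  have hmk : (graphOf w).connectedComponentMk i = (graphOf w).connectedComponentMk j :=
    SimpleGraph.ConnectedComponent.sound hadj.reachable
  have hmem : i ∈ A r ↔ j ∈ A r := by rw [hA]; simp only [Set.mem_setOf_eq, hmk]
  unfold chi Set.indicator
  by_cases h : i ∈ A r
  · rw [if_pos h, if_pos (hmem.mp h)]
  · rw [if_neg h, if_neg (fun hj => h (hmem.mpr hj))]


/-- Theorem 1, non-uniqueness: for `γr, γc > 0`, if Assumption 1 fails then
the set of global minimizers of the BMC objective `F` is infinite. -/
theorem bmc_infinitely_many_minimizers {n p R C : ℕ} (Ω : Finset (Fin n × Fin p))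
    (X : Matrix (Fin n) (Fin p) ℝ) (γr γc : ℝ) (hγr : 0 < γr) (hγc : 0 < γc)
    (w : Fin n → Fin n → ℝ) (wt : Fin p → Fin p → ℝ)
    (hsymm : ∀ i j, w i j = w j i) (hnonneg : ∀ i j, 0 ≤ w i j)
    (hdiag : ∀ i, w i i = 0)
    (hsymm' : ∀ i j, wt i j = wt j i) (hnonneg' : ∀ i j, 0 ≤ wt i j)
    (hdiag' : ∀ i, wt i i = 0)
    (A : Fin R → Set (Fin n))
    (eA : (graphOf w).ConnectedComponent ≃ Fin R)
    (hA : ∀ r, A r = {v | eA ((graphOf w).connectedComponentMk v) = r})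
    (B : Fin C → Set (Fin p))
    (eB : (graphOf wt).ConnectedComponent ≃ Fin C)
    (hB : ∀ c, B c = {v | eB ((graphOf wt).connectedComponentMk v) = c})
    (hfail : ¬ (∀ r c, ∃ q ∈ Ω, q.1 ∈ A r ∧ q.2 ∈ B c)) :
    {Z : Matrix (Fin n) (Fin p) ℝ |
      ∀ Z' : Matrix (Fin n) (Fin p) ℝ,
        objF Ω X γr γc w wt Z ≤ objF Ω X γr γc w wt Z'}.Infinite := by
  push_neg at hfail
  obtain ⟨r, c, hrc⟩ := hfail
  -- A r and B c are nonempty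
  obtain ⟨i₀, hi₀⟩ : ∃ i₀, i₀ ∈ A r := by
    obtain ⟨v, hv⟩ := (eA.symm r).exists_rep
    have hv' : (graphOf w).connectedComponentMk v = eA.symm r := hv
    exact ⟨v, by rw [hA]; simp [hv']⟩
  obtain ⟨j₀, hj₀⟩ : ∃ j₀, j₀ ∈ B c := by
    obtain ⟨v, hv⟩ := (eB.symm c).exists_rep
    have hv' : (graphOf wt).connectedComponentMk v = eB.symm c := hv
    exact ⟨v, by rw [hB]; simp [hv']⟩
  -- the invariance direction
  set E : Matrix (Fin n) (Fin p) ℝ := Matrix.of (fun i j => chi (A r) i * chi (B c) j) with hE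
  -- invariance of objF
  have hinv : ∀ (t : ℝ) (Z : Matrix (Fin n) (Fin p) ℝ),
      objF Ω X γr γc w wt (Z + t • E) = objF Ω X γr γc w wt Z := by
    intro t Z
    unfold objF Jpen
    have hdata : ∀ q ∈ Ω, (Z + t • E) q.1 q.2 = Z q.1 q.2 := by
      intro q hq
      have hzero : chi (A r) q.1 * chi (B c) q.2 = 0 := by
        by_cases h : q.1 ∈ A r
        · have h2 := hrc q hq h
          unfold chi Set.indicator; rw [if_neg h2]; ring
        · unfold chi Set.indicator; rw [if_neg h]; ring
      simp [Matrix.add_apply, Matrix.smul_apply, hE, smul_eq_mul, hzero]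
    have hrow : ∀ (i j : Fin n), i ≠ j → w i j ≠ 0 →
        ∀ k, (Z + t • E) i k - (Z + t • E) j k = Z i k - Z j k := by
      intro i j hij hw k
      have hchi := chi_congr A eA hA r hij (lt_of_le_of_ne (hnonneg i j) (Ne.symm hw))
      simp only [Matrix.add_apply, Matrix.smul_apply, hE, Matrix.of_apply, smul_eq_mul, hchi]
      ring
    have hcol : ∀ (i j : Fin p), i ≠ j → wt i j ≠ 0 →
        ∀ k, (Z + t • E) k i - (Z + t • E) k j = Z k i - Z k j := by
      intro i j hij hw k
      have hchi := chi_congr B eB hB c hij (lt_of_le_of_ne (hnonneg' i j) (Ne.symm hw))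
      simp only [Matrix.add_apply, Matrix.smul_apply, hE, Matrix.of_apply, smul_eq_mul, hchi]
      ring
    congr 1
    · congr 1
      exact Finset.sum_congr rfl fun q hq => by rw [hdata q hq]
    · congr 1
      · congr 1
        refine Finset.sum_congr rfl fun i _ => Finset.sum_congr rfl fun j hj => ?_
        have hij : i ≠ j := Fin.ne_of_lt (Finset.mem_Ioi.mp hj)
        by_cases hw : w i j = 0
        · rw [hw]; ring
        · rw [Finset.sum_congr rfl fun k _ => by rw [hrow i j hij hw k]]
      · congr 1
        refine Finset.sum_congr rfl fun i _ => Finset.sum_congr rfl fun j hj => ?_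
        have hij : i ≠ j := Fin.ne_of_lt (Finset.mem_Ioi.mp hj)
        by_cases hw : wt i j = 0
        · rw [hw]; ring
        · rw [Finset.sum_congr rfl fun k _ => by rw [hcol i j hij hw k]]
  obtain ⟨Z₀, hZ₀⟩ := bmc_exists_min Ω X γr γc hγr.le hγc.le w wt hnonneg hnonneg'
  have hEij : E i₀ j₀ = 1 := by
    simp only [hE, Matrix.of_apply]
    unfold chi Set.indicator
    rw [if_pos hi₀, if_pos hj₀]; ring
  refine Set.infinite_of_injective_forall_mem
    (f := fun t : ℝ => Z₀ + t • E) ?_ ?_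
  · intro s t hst
    have := congrFun (congrFun hst i₀) j₀
    simp only [Matrix.add_apply, Matrix.smul_apply, smul_eq_mul, hEij, mul_one] at this
    linarith
  · intro t
    intro Z'
    rw [hinv t Z₀]
    exact hZ₀ Z'
end

section
/- The intersection of the kernels of the two Kronecker Laplacian matrices equals the span of the Kronecker products of component indicator vectors: Ker(I_p ⊗ L_r) ∩ Ker(L_c ⊗ I_n) = Span{ χ_{B_c} ⊗ χ_{A_r} : r = 1,…,R, c = 1,…,C }. -/
/-!
For symmetric nonnegative weights with zero diagonal, `2 xᵀ L x = ∑ᵢⱼ wᵢⱼ (xᵢ - xⱼ)²`, so `L x = 0`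
exactly when `x` is constant along edges, i.e. on connected components. A vector indexed by
`Fin p × Fin n` lies in `Ker (I ⊗ L_r)` iff each of its slices `j ↦ x (i, j)` lies in `Ker L_r`, and
in `Ker (L_c ⊗ I)` iff each slice `i ↦ x (i, j)` lies in `Ker L_c`. Both together say that `x`
factors through the pair of component maps, and such functions are spanned by the indicators of
its fibres, which are the products `χ_{B_c} ⊗ χ_{A_r}`.
-/

open Matrix BigOperators Finset Kronecker

/-- The weighted graph Laplacian: `L i i = ∑ j, w i j` and `L i j = -(w i j)` for `i ≠ j`. -/
noncomputable def lap {n : ℕ} (w : Fin n → Fin n → ℝ) : Matrix (Fin n) (Fin n) ℝ :=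
  Matrix.of fun i j => if i = j then (∑ k, w i k) else -(w i j)

/-- The diagonal 0/1 projection matrix `P_Ω`, acting on column-major vectorizations
indexed by `Fin p × Fin n` (first the column index, then the row index). -/
noncomputable def Pmat {n p : ℕ} (Ω : Finset (Fin n × Fin p)) :
    Matrix (Fin p × Fin n) (Fin p × Fin n) ℝ :=
  Matrix.diagonal fun q => if (q.2, q.1) ∈ Ω then (1 : ℝ) else 0

/-- The matrix `S(γr, γc) = P_Ω + γr (I_p ⊗ L_r) + γc (L_c ⊗ I_n)`. -/
noncomputable def Smat {n p : ℕ} (Ω : Finset (Fin n × Fin p)) (γr γc : ℝ)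
    (Lr : Matrix (Fin n) (Fin n) ℝ) (Lc : Matrix (Fin p) (Fin p) ℝ) :
    Matrix (Fin p × Fin n) (Fin p × Fin n) ℝ :=
  Pmat Ω + γr • ((1 : Matrix (Fin p) (Fin p) ℝ) ⊗ₖ Lr)
    + γc • (Lc ⊗ₖ (1 : Matrix (Fin n) (Fin n) ℝ))

section Kronecker

variable {R : Type*} [Semiring R] {l m : Type*} [Fintype l] [Fintype m]

theorem one_kronecker_mulVec_apply [DecidableEq l] (M : Matrix m m R) (x : l × m → R)
    (i : l) (j : m) :
    (((1 : Matrix l l R) ⊗ₖ M) *ᵥ x) (i, j) = (M *ᵥ fun j' => x (i, j')) j := by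
  simp [mulVec, dotProduct, Fintype.sum_prod_type, one_apply, ite_mul, Finset.sum_ite_eq]

theorem kronecker_one_mulVec_apply [DecidableEq m] (M : Matrix l l R) (x : l × m → R)
    (i : l) (j : m) :
    ((M ⊗ₖ (1 : Matrix m m R)) *ᵥ x) (i, j) = (M *ᵥ fun i' => x (i', j)) i := by
  simp [mulVec, dotProduct, Fintype.sum_prod_type, one_apply, mul_ite, Finset.sum_ite_eq]

theorem one_kronecker_mulVec_eq_zero_iff [DecidableEq l] (M : Matrix m m R) (x : l × m → R) :
    ((1 : Matrix l l R) ⊗ₖ M) *ᵥ x = 0 ↔ ∀ i, (M *ᵥ fun j => x (i, j)) = 0 := by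
  simp only [funext_iff, Prod.forall, one_kronecker_mulVec_apply, Pi.zero_apply]

theorem kronecker_one_mulVec_eq_zero_iff [DecidableEq m] (M : Matrix l l R) (x : l × m → R) :
    (M ⊗ₖ (1 : Matrix m m R)) *ᵥ x = 0 ↔ ∀ j, (M *ᵥ fun i => x (i, j)) = 0 := by
  simp only [funext_iff, Prod.forall, kronecker_one_mulVec_apply, Pi.zero_apply]
  exact forall_comm

end Kronecker

theorem Function.factorsThrough_prodMap_iff {α β γ δ M : Type*} {f : α → γ} {g : β → δ}
    {x : α × β → M} :
    Function.FactorsThrough x (Prod.map f g) ↔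
      (∀ i, FactorsThrough (fun j => x (i, j)) g) ∧ ∀ j, FactorsThrough (fun i => x (i, j)) f := by
  refine ⟨fun h => ⟨fun i j j' hj => h (by simp [hj]), fun j i i' hi => h (by simp [hi])⟩, ?_⟩
  rintro ⟨hrow, hcol⟩ ⟨i, j⟩ ⟨i', j'⟩ hij
  obtain ⟨hi, hj⟩ := Prod.ext_iff.mp hij
  exact (hrow i hj).trans (hcol j' hi)

section FunLeft

open Function

variable {K M ι α : Type*} [Semiring K] [AddCommMonoid M] [Module K M]

theorem LinearMap.mem_range_funLeft_iff (φ : α → ι) (x : α → M) :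
    x ∈ LinearMap.range (funLeft K M φ) ↔ FactorsThrough x φ := by
  rw [factorsThrough_iff]
  simp [LinearMap.mem_range, funLeft, eq_comm]

theorem LinearMap.span_range_apply_single [Fintype ι] [DecidableEq ι] (f : (ι → K) →ₗ[K] M) :
    Submodule.span K (Set.range fun i => f (Pi.single i 1)) = LinearMap.range f := by
  rw [LinearMap.range_eq_map, ← (Pi.basisFun K ι).span_eq, Submodule.map_span, ← Set.range_comp]
  simp only [Function.comp_def, Pi.basisFun_apply]

end FunLeft

section Laplacian

variable {n : ℕ} {w : Fin n → Fin n → ℝ}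

theorem lap_mulVec_apply (hdiag : ∀ i, w i i = 0) (x : Fin n → ℝ) (i : Fin n) :
    (lap w *ᵥ x) i = ∑ j, w i j * (x i - x j) := by
  have hrow : ∀ j, lap w i j * x j = (if i = j then (∑ k, w i k) * x i else 0) - w i j * x j := by
    intro j
    rcases eq_or_ne i j with rfl | hij
    · simp [lap, hdiag]
    · simp [lap, hij]
  simp only [mulVec, dotProduct, hrow, Finset.sum_sub_distrib, Finset.sum_ite_eq, Finset.mem_univ,
    if_true, Finset.sum_mul, mul_sub]

theorem two_mul_dotProduct_lap_mulVec (hsymm : ∀ i j, w i j = w j i) (hdiag : ∀ i, w i i = 0)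
    (x : Fin n → ℝ) :
    2 * (x ⬝ᵥ lap w *ᵥ x) = ∑ i, ∑ j, w i j * (x i - x j) ^ 2 := by
  have hswap : ∑ i, ∑ j, x i * (w i j * (x i - x j)) = ∑ i, ∑ j, x j * (w i j * (x j - x i)) := by
    rw [Finset.sum_comm]
    simp only [hsymm]
  calc 2 * (x ⬝ᵥ lap w *ᵥ x)
      = ∑ i, ∑ j, x i * (w i j * (x i - x j)) + ∑ i, ∑ j, x j * (w i j * (x j - x i)) := by
        rw [← hswap, two_mul]
        simp only [dotProduct, lap_mulVec_apply hdiag, Finset.mul_sum]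
    _ = ∑ i, ∑ j, w i j * (x i - x j) ^ 2 := by
        simp only [← Finset.sum_add_distrib]
        exact Finset.sum_congr rfl fun i _ => Finset.sum_congr rfl fun j _ => by ring

theorem lap_mulVec_eq_zero_iff_forall_adj (hsymm : ∀ i j, w i j = w j i)
    (hnonneg : ∀ i j, 0 ≤ w i j) (hdiag : ∀ i, w i i = 0) (x : Fin n → ℝ) :
    lap w *ᵥ x = 0 ↔ ∀ i j, (graphOf w).Adj i j → x i = x j := by
  have hpos_of_adj : ∀ i j, (graphOf w).Adj i j → 0 < w i j := by
    intro i j hij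
    rcases ((SimpleGraph.fromRel_adj _ _ _).mp hij).2 with h | h
    · exact h
    · rwa [hsymm]
  constructor
  · intro hx i j hij
    have hsum : ∑ i, ∑ j, w i j * (x i - x j) ^ 2 = 0 := by
      rw [← two_mul_dotProduct_lap_mulVec hsymm hdiag, hx, dotProduct_zero, mul_zero]
    have hnonneg_term : ∀ i j, 0 ≤ w i j * (x i - x j) ^ 2 :=
      fun i j => mul_nonneg (hnonneg i j) (sq_nonneg _)
    rw [Fintype.sum_eq_zero_iff_of_nonneg fun i => Finset.sum_nonneg fun j _ => hnonneg_term i j]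
      at hsum
    have hterm : w i j * (x i - x j) ^ 2 = 0 :=
      congrFun ((Fintype.sum_eq_zero_iff_of_nonneg (hnonneg_term i)).mp (congrFun hsum i)) j
    have hsq : (x i - x j) ^ 2 = 0 := (mul_eq_zero.mp hterm).resolve_left (hpos_of_adj i j hij).ne'
    exact sub_eq_zero.mp (pow_eq_zero_iff two_ne_zero |>.mp hsq)
  · intro hadj
    funext i
    rw [lap_mulVec_apply hdiag, Pi.zero_apply]
    refine Finset.sum_eq_zero fun j _ => ?_
    rcases (hnonneg i j).eq_or_lt with hw | hw
    · rw [← hw, zero_mul]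
    · have hij : i ≠ j := by rintro rfl; exact hw.ne' (hdiag i)
      rw [hadj i j ((SimpleGraph.fromRel_adj _ _ _).mpr ⟨hij, Or.inl hw⟩), sub_self, mul_zero]

theorem lap_mulVec_eq_zero_iff_forall_reachable (hsymm : ∀ i j, w i j = w j i)
    (hnonneg : ∀ i j, 0 ≤ w i j) (hdiag : ∀ i, w i i = 0) (x : Fin n → ℝ) :
    lap w *ᵥ x = 0 ↔ ∀ i j, (graphOf w).Reachable i j → x i = x j := by
  rw [lap_mulVec_eq_zero_iff_forall_adj hsymm hnonneg hdiag]
  refine ⟨?_, fun h i j hij => h i j hij.reachable⟩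
  intro h i j ⟨walk⟩
  induction walk with
  | nil => rfl
  | cons hadj _ ih => exact (h _ _ hadj).trans ih

end Laplacian

theorem SimpleGraph.factorsThrough_comp_connectedComponentMk_iff {V ι M : Type*}
    {G : SimpleGraph V} {e : G.ConnectedComponent → ι} (he : Function.Injective e) {x : V → M} :
    Function.FactorsThrough x (e ∘ G.connectedComponentMk) ↔
      ∀ i j, G.Reachable i j → x i = x j := by
  simp only [Function.FactorsThrough, Function.comp_apply, he.eq_iff, ConnectedComponent.eq]

theorem chi_setOf_eq {n : ℕ} {ι : Type*} [DecidableEq ι] (a : Fin n → ι) (r : ι) :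
    chi {v | a v = r} = fun v => if a v = r then 1 else 0 := by
  funext v
  simp only [chi, Set.indicator_apply, Set.mem_ofPred_eq]

/-- `Ker(I_p ⊗ L_r) ∩ Ker(L_c ⊗ I_n)` equals the span of the Kronecker
products `χ_{B_c} ⊗ χ_{A_r}` of component indicator vectors. -/
theorem kron_kernel_intersection {n p R C : ℕ}
    (w : Fin n → Fin n → ℝ) (wt : Fin p → Fin p → ℝ)
    (hsymm : ∀ i j, w i j = w j i) (hnonneg : ∀ i j, 0 ≤ w i j)
    (hdiag : ∀ i, w i i = 0)
    (hsymm' : ∀ i j, wt i j = wt j i) (hnonneg' : ∀ i j, 0 ≤ wt i j)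
    (hdiag' : ∀ i, wt i i = 0)
    (A : Fin R → Set (Fin n))
    (eA : (graphOf w).ConnectedComponent ≃ Fin R)
    (hA : ∀ r, A r = {v | eA ((graphOf w).connectedComponentMk v) = r})
    (B : Fin C → Set (Fin p))
    (eB : (graphOf wt).ConnectedComponent ≃ Fin C)
    (hB : ∀ c, B c = {v | eB ((graphOf wt).connectedComponentMk v) = c}) :
    LinearMap.ker ((1 : Matrix (Fin p) (Fin p) ℝ) ⊗ₖ lap w).mulVecLin
        ⊓ LinearMap.ker (lap wt ⊗ₖ (1 : Matrix (Fin n) (Fin n) ℝ)).mulVecLin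
      = Submodule.span ℝ
          (Set.range fun rc : Fin R × Fin C =>
            fun q : Fin p × Fin n => chi (B rc.2) q.1 * chi (A rc.1) q.2) := by
  set a := eA ∘ (graphOf w).connectedComponentMk
  set b := eB ∘ (graphOf wt).connectedComponentMk
  have hgen : (fun rc : Fin R × Fin C =>
      fun q : Fin p × Fin n => chi (B rc.2) q.1 * chi (A rc.1) q.2)
        = (fun cr => LinearMap.funLeft ℝ ℝ (Prod.map b a) (Pi.single cr 1)) ∘ Prod.swap := by
    funext ⟨r, c⟩ ⟨i, j⟩
    simp only [hA, hB, chi_setOf_eq, Function.comp_apply, LinearMap.funLeft_apply, Prod.map_apply,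
      Prod.swap_prod_mk, Pi.single_apply, Prod.ext_iff, ite_zero_mul_ite_zero, mul_one, a, b]
  rw [hgen, Prod.swap_surjective.range_comp, LinearMap.span_range_apply_single]
  ext x
  simp only [Submodule.mem_inf, LinearMap.mem_ker, mulVecLin_apply,
    one_kronecker_mulVec_eq_zero_iff, kronecker_one_mulVec_eq_zero_iff,
    lap_mulVec_eq_zero_iff_forall_reachable hsymm hnonneg hdiag,
    lap_mulVec_eq_zero_iff_forall_reachable hsymm' hnonneg' hdiag',
    LinearMap.mem_range_funLeft_iff, Function.factorsThrough_prodMap_iff,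
    SimpleGraph.factorsThrough_comp_connectedComponentMk_iff eA.injective,
    SimpleGraph.factorsThrough_comp_connectedComponentMk_iff eB.injective, a, b]
end

section
/- (Theorem 2) Suppose Assumption 1 holds. For positive γ_r, γ_c let Z(γ_r, γ_c) denote the unique global minimizer of F. Then for every sequence (γ_r^{(m)}, γ_c^{(m)}) of strictly positive pairs with min{γ_r^{(m)}, γ_c^{(m)}} → ∞ as m → ∞, the minimizers Z(γ_r^{(m)}, γ_c^{(m)}) converge to Z* = Σ_{r=1}^R Σ_{c=1}^C μ*_{rc} χ_{A_r} χ_{B_c}^T, where Ω_{rc} = {(i,j) ∈ Ω : i ∈ A_r, j ∈ B_c} and μ*_{rc} = |Ω_{rc}|^{-1} Σ_{(i,j)∈Ω_{rc}} X_{ij}. -/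
open Matrix BigOperators Finset Filter
open scoped Classical Topology

/-- The observed entries inside the bicluster `A_r × B_c`. -/
noncomputable def biclusterObs {n p R C : ℕ} (Ω : Finset (Fin n × Fin p))
    (A : Fin R → Set (Fin n)) (B : Fin C → Set (Fin p)) (r : Fin R) (c : Fin C) :
    Finset (Fin n × Fin p) :=
  Ω.filter fun q => q.1 ∈ A r ∧ q.2 ∈ B c

/-- `Z* = ∑_{r,c} μ*_{rc} χ_{A_r} χ_{B_c}ᵀ` where `μ*_{rc}` is the average of the observed
entries of `X` over the bicluster `A_r × B_c`. -/
noncomputable def Zstar {n p R C : ℕ} (Ω : Finset (Fin n × Fin p))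
    (X : Matrix (Fin n) (Fin p) ℝ)
    (A : Fin R → Set (Fin n)) (B : Fin C → Set (Fin p)) : Matrix (Fin n) (Fin p) ℝ :=
  Matrix.of fun i j =>
    ∑ r, ∑ c,
      ((∑ q ∈ biclusterObs Ω A B r c, X q.1 q.2) / ((biclusterObs Ω A B r c).card : ℝ))
        * chi (A r) i * chi (B c) j

lemma aux_tendsto_of_sq (f : ℕ → ℝ) (h : Tendsto (fun m => (f m) ^ 2) atTop (𝓝 0)) :
    Tendsto f atTop (𝓝 0) := by
  have h1 : Tendsto (fun m => Real.sqrt ((f m) ^ 2)) atTop (𝓝 0) := by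
    have := (Real.continuous_sqrt.tendsto 0).comp h
    simpa [Function.comp_def] using this
  have h2 : Tendsto (fun m => |f m|) atTop (𝓝 0) := by
    simpa [Real.sqrt_sq_eq_abs] using h1
  exact tendsto_zero_iff_abs_tendsto_zero f |>.mpr h2
lemma aux_mean_decomp {ι : Type*} (s : Finset ι) (f : ι → ℝ) (t : ℝ) :
    ∑ q ∈ s, (f q - t) ^ 2
      = ∑ q ∈ s, (f q - (∑ x ∈ s, f x) / s.card) ^ 2
        + s.card * (t - (∑ x ∈ s, f x) / s.card) ^ 2 := by
  set μ := (∑ x ∈ s, f x) / s.card with hμdef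
  have hsum : ∑ x ∈ s, f x = s.card * μ := by
    rw [hμdef]
    rcases eq_or_ne (s.card : ℝ) 0 with h | h
    · rw [h, zero_mul]
      have : s.card = 0 := by exact_mod_cast h
      simp [Finset.card_eq_zero.mp this]
    · field_simp
  have h1 : ∀ q ∈ s, (f q - t) ^ 2
      = (f q - μ) ^ 2 + (2 * (μ - t)) * (f q) + ((t - μ) ^ 2 - 2 * (μ - t) * μ) :=
    fun q _ => by ring
  rw [Finset.sum_congr rfl h1, Finset.sum_add_distrib, Finset.sum_add_distrib,
    ← Finset.mul_sum, hsum, Finset.sum_const, nsmul_eq_mul]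
  ring


lemma aux_reachable_tendsto {V : Type*} {G : SimpleGraph V} {Z : ℕ → V → ℝ}
    (hadj : ∀ i j, G.Adj i j → Tendsto (fun m => Z m i - Z m j) atTop (𝓝 0)) :
    ∀ i j, G.Reachable i j → Tendsto (fun m => Z m i - Z m j) atTop (𝓝 0) := by
  intro i j h
  obtain ⟨W⟩ := h
  induction W with
  | nil => simpa using (tendsto_const_nhds : Tendsto (fun _ : ℕ => (0:ℝ)) atTop (𝓝 0))
  | cons hadj' W ih =>
    rename_i u v b
    have h2 := (hadj u v hadj').add ih
    have heq : (fun m => (Z m u - Z m v) + (Z m v - Z m b)) = fun m => Z m u - Z m b := by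
      funext m; ring
    rw [heq] at h2
    simpa using h2

/-- Theorem 2: under Assumption 1, along any sequence of strictly positive
regularization parameters with `min{γr, γc} → ∞`, the (unique) minimizers of `F` converge
to `Z*`. -/
theorem bmc_limiting_solution {n p R C : ℕ} (Ω : Finset (Fin n × Fin p))
    (X : Matrix (Fin n) (Fin p) ℝ)
    (w : Fin n → Fin n → ℝ) (wt : Fin p → Fin p → ℝ)
    (hsymm : ∀ i j, w i j = w j i) (hnonneg : ∀ i j, 0 ≤ w i j)
    (hdiag : ∀ i, w i i = 0)
    (hsymm' : ∀ i j, wt i j = wt j i) (hnonneg' : ∀ i j, 0 ≤ wt i j)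
    (hdiag' : ∀ i, wt i i = 0)
    (A : Fin R → Set (Fin n))
    (eA : (graphOf w).ConnectedComponent ≃ Fin R)
    (hA : ∀ r, A r = {v | eA ((graphOf w).connectedComponentMk v) = r})
    (B : Fin C → Set (Fin p))
    (eB : (graphOf wt).ConnectedComponent ≃ Fin C)
    (hB : ∀ c, B c = {v | eB ((graphOf wt).connectedComponentMk v) = c})
    (hobs : ∀ r c, ∃ q ∈ Ω, q.1 ∈ A r ∧ q.2 ∈ B c)
    (γ : ℕ → ℝ × ℝ) (hpos : ∀ m, 0 < (γ m).1 ∧ 0 < (γ m).2)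
    (hdiv : Tendsto (fun m => min (γ m).1 (γ m).2) atTop atTop)
    (Zseq : ℕ → Matrix (Fin n) (Fin p) ℝ)
    (hZ : ∀ m, ∀ Z' : Matrix (Fin n) (Fin p) ℝ,
      objF Ω X (γ m).1 (γ m).2 w wt (Zseq m) ≤ objF Ω X (γ m).1 (γ m).2 w wt Z') :
    Tendsto Zseq atTop (𝓝 (Zstar Ω X A B)) := by
  -- notation
  set key1 : Fin n → Fin R := fun i => eA ((graphOf w).connectedComponentMk i) with hkey1
  set key2 : Fin p → Fin C := fun j => eB ((graphOf wt).connectedComponentMk j) with hkey2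
  have hmemA : ∀ (r : Fin R) (i : Fin n), i ∈ A r ↔ key1 i = r := by
    intro r i; rw [hA]; simp [hkey1]
  have hmemB : ∀ (c : Fin C) (j : Fin p), j ∈ B c ↔ key2 j = c := by
    intro c j; rw [hB]; simp [hkey2]
  -- block membership
  have hbic : ∀ r c (q : Fin n × Fin p),
      q ∈ biclusterObs Ω A B r c ↔ q ∈ Ω ∧ key1 q.1 = r ∧ key2 q.2 = c := by
    intro r c q
    simp [biclusterObs, hmemA, hmemB]
  set μ : Fin R → Fin C → ℝ := fun r c =>
    (∑ q ∈ biclusterObs Ω A B r c, X q.1 q.2) / ((biclusterObs Ω A B r c).card : ℝ) with hμ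
  -- Zstar entries
  have hZs : ∀ i j, Zstar Ω X A B i j = μ (key1 i) (key2 j) := by
    intro i j
    show (∑ r, ∑ c, ((∑ q ∈ biclusterObs Ω A B r c, X q.1 q.2) /
        ((biclusterObs Ω A B r c).card : ℝ)) * chi (A r) i * chi (B c) j)
      = μ (key1 i) (key2 j)
    rw [Finset.sum_eq_single (key1 i)]
    · rw [Finset.sum_eq_single (key2 j)]
      · have h1 : chi (A (key1 i)) i = 1 := by
          simp [chi, Set.indicator_apply, (hmemA (key1 i) i).mpr rfl]
        have h2 : chi (B (key2 j)) j = 1 := by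
          simp [chi, Set.indicator_apply, (hmemB (key2 j) j).mpr rfl]
        rw [h1, h2, hμ]; ring
      · intro c _ hc
        have : chi (B c) j = 0 := by
          simp only [chi, Set.indicator_apply, ite_eq_right_iff]
          exact fun hmem => absurd ((hmemB c j).mp hmem).symm hc
        rw [this, mul_zero]
      · intro h; exact absurd (Finset.mem_univ _) h
    · intro r _ hr
      have : chi (A r) i = 0 := by
        simp only [chi, Set.indicator_apply, ite_eq_right_iff]
        exact fun hmem => absurd ((hmemA r i).mp hmem).symm hr
      rw [Finset.sum_eq_zero]
      intro c _
      rw [this, mul_zero, zero_mul]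
    · intro h; exact absurd (Finset.mem_univ _) h
  -- J(Zstar) = 0
  have hrow0 : ∑ i, ∑ j ∈ Finset.Ioi i, w i j * ∑ k, (Zstar Ω X A B i k - Zstar Ω X A B j k) ^ 2 = 0 := by
    apply Finset.sum_eq_zero; intro i _
    apply Finset.sum_eq_zero; intro j hj
    rcases (hnonneg i j).eq_or_lt with h | h
    · rw [← h, zero_mul]
    · have hne : i ≠ j := ne_of_lt (Finset.mem_Ioi.mp hj)
      have hadj : (graphOf w).Adj i j := ⟨hne, Or.inl h⟩
      have hcomp : key1 i = key1 j :=
        congrArg eA (SimpleGraph.ConnectedComponent.sound hadj.reachable)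
      have : ∑ k, (Zstar Ω X A B i k - Zstar Ω X A B j k) ^ 2 = 0 := by
        apply Finset.sum_eq_zero; intro k _
        rw [hZs, hZs, hcomp, sub_self]; ring
      rw [this, mul_zero]
  have hcol0 : ∑ i, ∑ j ∈ Finset.Ioi i, wt i j * ∑ k, (Zstar Ω X A B k i - Zstar Ω X A B k j) ^ 2 = 0 := by
    apply Finset.sum_eq_zero; intro i _
    apply Finset.sum_eq_zero; intro j hj
    rcases (hnonneg' i j).eq_or_lt with h | h
    · rw [← h, zero_mul]
    · have hne : i ≠ j := ne_of_lt (Finset.mem_Ioi.mp hj)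
      have hadj : (graphOf wt).Adj i j := ⟨hne, Or.inl h⟩
      have hcomp : key2 i = key2 j :=
        congrArg eB (SimpleGraph.ConnectedComponent.sound hadj.reachable)
      have : ∑ k, (Zstar Ω X A B k i - Zstar Ω X A B k j) ^ 2 = 0 := by
        apply Finset.sum_eq_zero; intro k _
        rw [hZs, hZs, hcomp, sub_self]; ring
      rw [this, mul_zero]
  set D0 : ℝ := (1 / 2) * ∑ q ∈ Ω, (X q.1 q.2 - Zstar Ω X A B q.1 q.2) ^ 2 with hD0
  have hFstar : ∀ m, objF Ω X (γ m).1 (γ m).2 w wt (Zstar Ω X A B) = D0 := by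
    intro m
    rw [objF, Jpen, hrow0, hcol0, mul_zero, mul_zero, add_zero, add_zero, hD0]
  -- nonnegativity of penalty pieces
  have hrowNN : ∀ (Z : Matrix (Fin n) (Fin p) ℝ),
      0 ≤ ∑ i, ∑ j ∈ Finset.Ioi i, w i j * ∑ k, (Z i k - Z j k) ^ 2 := by
    intro Z
    apply Finset.sum_nonneg; intro i _
    apply Finset.sum_nonneg; intro j _
    exact mul_nonneg (hnonneg i j) (Finset.sum_nonneg fun k _ => sq_nonneg _)
  have hcolNN : ∀ (Z : Matrix (Fin n) (Fin p) ℝ),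
      0 ≤ ∑ i, ∑ j ∈ Finset.Ioi i, wt i j * ∑ k, (Z k i - Z k j) ^ 2 := by
    intro Z
    apply Finset.sum_nonneg; intro i _
    apply Finset.sum_nonneg; intro j _
    exact mul_nonneg (hnonneg' i j) (Finset.sum_nonneg fun k _ => sq_nonneg _)
  have hJNN : ∀ m (Z : Matrix (Fin n) (Fin p) ℝ), 0 ≤ Jpen (γ m).1 (γ m).2 w wt Z := by
    intro m Z
    have h1 := (hpos m).1
    have h2 := (hpos m).2
    exact add_nonneg (mul_nonneg (by linarith) (hrowNN Z)) (mul_nonneg (by linarith) (hcolNN Z))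
  have hdataNN : ∀ m, 0 ≤ (1 / 2) * ∑ q ∈ Ω, (X q.1 q.2 - Zseq m q.1 q.2) ^ 2 := by
    intro m
    exact mul_nonneg (by norm_num) (Finset.sum_nonneg fun q _ => sq_nonneg _)
  have hFle : ∀ m, objF Ω X (γ m).1 (γ m).2 w wt (Zseq m) ≤ D0 := by
    intro m; rw [← hFstar m]; exact hZ m _
  have hdata_le : ∀ m, (1 / 2) * ∑ q ∈ Ω, (X q.1 q.2 - Zseq m q.1 q.2) ^ 2 ≤ D0 := by
    intro m
    have := hFle m
    rw [objF] at this
    linarith [hJNN m (Zseq m)]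
  have hJle : ∀ m, Jpen (γ m).1 (γ m).2 w wt (Zseq m) ≤ D0 := by
    intro m
    have := hFle m
    rw [objF] at this
    linarith [hdataNN m]
  -- residual bound
  have hres : ∀ m, ∀ q ∈ Ω, (X q.1 q.2 - Zseq m q.1 q.2) ^ 2 ≤ 2 * D0 := by
    intro m q hq
    have h1 : (X q.1 q.2 - Zseq m q.1 q.2) ^ 2 ≤ ∑ q ∈ Ω, (X q.1 q.2 - Zseq m q.1 q.2) ^ 2 :=
      Finset.single_le_sum (f := fun q => (X q.1 q.2 - Zseq m q.1 q.2) ^ 2)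
        (fun q _ => sq_nonneg _) hq
    have := hdata_le m
    linarith
  have hresabs : ∀ m, ∀ q ∈ Ω, |X q.1 q.2 - Zseq m q.1 q.2| ≤ Real.sqrt (2 * D0) := by
    intro m q hq
    rw [← Real.sqrt_sq_eq_abs]
    exact Real.sqrt_le_sqrt (hres m q hq)
  have hD0nn : 0 ≤ D0 := by
    rw [hD0]
    exact mul_nonneg (by norm_num) (Finset.sum_nonneg fun q _ => sq_nonneg _)
  set g : ℕ → ℝ := fun m => min (γ m).1 (γ m).2 with hg
  have hgpos : ∀ m, 0 < g m := fun m => lt_min (hpos m).1 (hpos m).2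
  have hgdiv : Tendsto g atTop atTop := hdiv
  -- generic: bound implies tendsto of squared difference
  have hbound_tendsto : ∀ (a : ℝ) (f : ℕ → ℝ), 0 < a →
      (∀ m, (f m) ^ 2 ≤ 2 * D0 * (a * g m)⁻¹) → Tendsto f atTop (𝓝 0) := by
    intro a f ha hb
    apply aux_tendsto_of_sq
    have h1 : Tendsto (fun m => a * g m) atTop atTop := hgdiv.const_mul_atTop ha
    have h2 : Tendsto (fun m => (a * g m)⁻¹) atTop (𝓝 0) := h1.inv_tendsto_atTop
    have h3 : Tendsto (fun m => 2 * D0 * (a * g m)⁻¹) atTop (𝓝 0) := by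
      have := h2.const_mul (2 * D0)
      simpa using this
    exact squeeze_zero (fun m => sq_nonneg _) hb h3
  -- edge differences tend to zero (rows)
  have hedge_lt : ∀ i j : Fin n, i < j → 0 < w i j → ∀ k,
      Tendsto (fun m => Zseq m i k - Zseq m j k) atTop (𝓝 0) := by
    intro i j hij hw k
    apply hbound_tendsto (w i j) _ hw
    intro m
    set d : ℝ := (Zseq m i k - Zseq m j k) ^ 2 with hd
    have hS : w i j * ∑ k, (Zseq m i k - Zseq m j k) ^ 2
        ≤ ∑ i, ∑ j ∈ Finset.Ioi i, w i j * ∑ k, (Zseq m i k - Zseq m j k) ^ 2 := by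
      have h1 : w i j * ∑ k, (Zseq m i k - Zseq m j k) ^ 2
          ≤ ∑ j' ∈ Finset.Ioi i, w i j' * ∑ k, (Zseq m i k - Zseq m j' k) ^ 2 :=
        Finset.single_le_sum
          (f := fun j' => w i j' * ∑ k, (Zseq m i k - Zseq m j' k) ^ 2)
          (fun j' _ => mul_nonneg (hnonneg i j') (Finset.sum_nonneg fun _ _ => sq_nonneg _))
          (Finset.mem_Ioi.mpr hij)
      refine le_trans h1 ?_
      exact Finset.single_le_sum
        (f := fun i => ∑ j ∈ Finset.Ioi i, w i j * ∑ k, (Zseq m i k - Zseq m j k) ^ 2)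
        (fun i' _ => Finset.sum_nonneg fun j' _ =>
          mul_nonneg (hnonneg i' j') (Finset.sum_nonneg fun _ _ => sq_nonneg _))
        (Finset.mem_univ i)
    have hterm : d ≤ ∑ k, (Zseq m i k - Zseq m j k) ^ 2 :=
      Finset.single_le_sum (f := fun k => (Zseq m i k - Zseq m j k) ^ 2)
        (fun _ _ => sq_nonneg _) (Finset.mem_univ k)
    have hJ := hJle m
    rw [Jpen] at hJ
    have hcol := hcolNN (Zseq m)
    have hγ1 : 0 < (γ m).1 := (hpos m).1
    have hγ2 : 0 < (γ m).2 := (hpos m).2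
    have hcolnn : 0 ≤ (γ m).2 / 2 * ∑ i, ∑ j ∈ Finset.Ioi i, wt i j
        * ∑ k, (Zseq m k i - Zseq m k j) ^ 2 := mul_nonneg (by linarith) hcol
    have hkey : (γ m).1 / 2 * (w i j * ∑ k, (Zseq m i k - Zseq m j k) ^ 2) ≤ D0 := by
      have h2 : (γ m).1 / 2 * (w i j * ∑ k, (Zseq m i k - Zseq m j k) ^ 2)
          ≤ (γ m).1 / 2 * ∑ i, ∑ j ∈ Finset.Ioi i, w i j * ∑ k, (Zseq m i k - Zseq m j k) ^ 2 :=
        mul_le_mul_of_nonneg_left hS (by linarith)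
      linarith
    have hgm : g m ≤ (γ m).1 := min_le_left _ _
    have hkey2 : g m / 2 * (w i j * d) ≤ D0 := by
      have hwd : 0 ≤ w i j * d := mul_nonneg hw.le (sq_nonneg _)
      have step1 : w i j * d ≤ w i j * ∑ k, (Zseq m i k - Zseq m j k) ^ 2 :=
        mul_le_mul_of_nonneg_left hterm hw.le
      have step2 : g m / 2 * (w i j * d) ≤ (γ m).1 / 2 * (w i j * d) :=
        mul_le_mul_of_nonneg_right (by linarith) hwd
      have step3 : (γ m).1 / 2 * (w i j * d)
          ≤ (γ m).1 / 2 * (w i j * ∑ k, (Zseq m i k - Zseq m j k) ^ 2) :=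
        mul_le_mul_of_nonneg_left step1 (by linarith)
      linarith
    have hpos' : 0 < w i j * g m := mul_pos hw (hgpos m)
    rw [show (2 : ℝ) * D0 * (w i j * g m)⁻¹ = (2 * D0) / (w i j * g m) from
      (div_eq_mul_inv _ _).symm, le_div_iff₀ hpos']
    nlinarith [hkey2]
  have hedge_row : ∀ i j : Fin n, (graphOf w).Adj i j → ∀ k,
      Tendsto (fun m => Zseq m i k - Zseq m j k) atTop (𝓝 0) := by
    intro i j hadj k
    obtain ⟨hne, hor⟩ := hadj
    have hw : 0 < w i j := by
      rcases hor with h | h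
      · exact h
      · rwa [hsymm]
    rcases lt_or_gt_of_ne hne with hij | hij
    · exact hedge_lt i j hij hw k
    · have hw' : 0 < w j i := by rwa [hsymm] at hw
      have := (hedge_lt j i hij hw' k).neg
      simpa using this
  -- edge differences tend to zero (columns)
  have hedge_lt' : ∀ i j : Fin p, i < j → 0 < wt i j → ∀ k,
      Tendsto (fun m => Zseq m k i - Zseq m k j) atTop (𝓝 0) := by
    intro i j hij hw k
    apply hbound_tendsto (wt i j) _ hw
    intro m
    set d : ℝ := (Zseq m k i - Zseq m k j) ^ 2 with hd
    have hS : wt i j * ∑ k, (Zseq m k i - Zseq m k j) ^ 2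
        ≤ ∑ i, ∑ j ∈ Finset.Ioi i, wt i j * ∑ k, (Zseq m k i - Zseq m k j) ^ 2 := by
      have h1 : wt i j * ∑ k, (Zseq m k i - Zseq m k j) ^ 2
          ≤ ∑ j' ∈ Finset.Ioi i, wt i j' * ∑ k, (Zseq m k i - Zseq m k j') ^ 2 :=
        Finset.single_le_sum
          (f := fun j' => wt i j' * ∑ k, (Zseq m k i - Zseq m k j') ^ 2)
          (fun j' _ => mul_nonneg (hnonneg' i j') (Finset.sum_nonneg fun _ _ => sq_nonneg _))
          (Finset.mem_Ioi.mpr hij)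
      refine le_trans h1 ?_
      exact Finset.single_le_sum
        (f := fun i => ∑ j ∈ Finset.Ioi i, wt i j * ∑ k, (Zseq m k i - Zseq m k j) ^ 2)
        (fun i' _ => Finset.sum_nonneg fun j' _ =>
          mul_nonneg (hnonneg' i' j') (Finset.sum_nonneg fun _ _ => sq_nonneg _))
        (Finset.mem_univ i)
    have hterm : d ≤ ∑ k, (Zseq m k i - Zseq m k j) ^ 2 :=
      Finset.single_le_sum (f := fun k => (Zseq m k i - Zseq m k j) ^ 2)
        (fun _ _ => sq_nonneg _) (Finset.mem_univ k)
    have hJ := hJle m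
    rw [Jpen] at hJ
    have hrow := hrowNN (Zseq m)
    have hγ1 : 0 < (γ m).1 := (hpos m).1
    have hγ2 : 0 < (γ m).2 := (hpos m).2
    have hrownn : 0 ≤ (γ m).1 / 2 * ∑ i, ∑ j ∈ Finset.Ioi i, w i j
        * ∑ k, (Zseq m i k - Zseq m j k) ^ 2 := mul_nonneg (by linarith) hrow
    have hkey : (γ m).2 / 2 * (wt i j * ∑ k, (Zseq m k i - Zseq m k j) ^ 2) ≤ D0 := by
      have h2 : (γ m).2 / 2 * (wt i j * ∑ k, (Zseq m k i - Zseq m k j) ^ 2)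
          ≤ (γ m).2 / 2 * ∑ i, ∑ j ∈ Finset.Ioi i, wt i j * ∑ k, (Zseq m k i - Zseq m k j) ^ 2 :=
        mul_le_mul_of_nonneg_left hS (by linarith)
      linarith
    have hgm : g m ≤ (γ m).2 := min_le_right _ _
    have hkey2 : g m / 2 * (wt i j * d) ≤ D0 := by
      have hwd : 0 ≤ wt i j * d := mul_nonneg hw.le (sq_nonneg _)
      have step1 : wt i j * d ≤ wt i j * ∑ k, (Zseq m k i - Zseq m k j) ^ 2 :=
        mul_le_mul_of_nonneg_left hterm hw.le
      have step2 : g m / 2 * (wt i j * d) ≤ (γ m).2 / 2 * (wt i j * d) :=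
        mul_le_mul_of_nonneg_right (by linarith) hwd
      have step3 : (γ m).2 / 2 * (wt i j * d)
          ≤ (γ m).2 / 2 * (wt i j * ∑ k, (Zseq m k i - Zseq m k j) ^ 2) :=
        mul_le_mul_of_nonneg_left step1 (by linarith)
      linarith
    have hpos' : 0 < wt i j * g m := mul_pos hw (hgpos m)
    rw [show (2 : ℝ) * D0 * (wt i j * g m)⁻¹ = (2 * D0) / (wt i j * g m) from
      (div_eq_mul_inv _ _).symm, le_div_iff₀ hpos']
    nlinarith [hkey2]
  have hedge_col : ∀ i j : Fin p, (graphOf wt).Adj i j → ∀ k,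
      Tendsto (fun m => Zseq m k i - Zseq m k j) atTop (𝓝 0) := by
    intro i j hadj k
    obtain ⟨hne, hor⟩ := hadj
    have hw : 0 < wt i j := by
      rcases hor with h | h
      · exact h
      · rwa [hsymm']
    rcases lt_or_gt_of_ne hne with hij | hij
    · exact hedge_lt' i j hij hw k
    · have hw' : 0 < wt j i := by rwa [hsymm'] at hw
      have := (hedge_lt' j i hij hw' k).neg
      simpa using this
  -- component-level convergence
  have hcomp_row : ∀ i i' : Fin n, key1 i = key1 i' → ∀ k,
      Tendsto (fun m => Zseq m i k - Zseq m i' k) atTop (𝓝 0) := by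
    intro i i' h k
    have hcc : (graphOf w).connectedComponentMk i = (graphOf w).connectedComponentMk i' :=
      eA.injective h
    exact aux_reachable_tendsto (Z := fun m i => Zseq m i k)
      (fun a b hab => hedge_row a b hab k) i i'
      (SimpleGraph.ConnectedComponent.exact hcc)
  have hcomp_col : ∀ j j' : Fin p, key2 j = key2 j' → ∀ k,
      Tendsto (fun m => Zseq m k j - Zseq m k j') atTop (𝓝 0) := by
    intro j j' h k
    have hcc : (graphOf wt).connectedComponentMk j = (graphOf wt).connectedComponentMk j' :=
      eB.injective h
    exact aux_reachable_tendsto (Z := fun m j => Zseq m k j)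
      (fun a b hab => hedge_col a b hab k) j j'
      (SimpleGraph.ConnectedComponent.exact hcc)
  -- pinned observed entries in each bicluster
  choose q0 hq0Ω hq0A hq0B using hobs
  have hq0key1 : ∀ r c, key1 (q0 r c).1 = r := fun r c => (hmemA r _).mp (hq0A r c)
  have hq0key2 : ∀ r c, key2 (q0 r c).2 = c := fun r c => (hmemB c _).mp (hq0B r c)
  set lam : ℕ → Fin R → Fin C → ℝ := fun m r c => Zseq m (q0 r c).1 (q0 r c).2 with hlamdef
  have hclose : ∀ i j, Tendsto (fun m => Zseq m i j - lam m (key1 i) (key2 j)) atTop (𝓝 0) := by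
    intro i j
    have h1 : Tendsto (fun m => Zseq m i j - Zseq m (q0 (key1 i) (key2 j)).1 j) atTop (𝓝 0) :=
      hcomp_row i (q0 (key1 i) (key2 j)).1 (by rw [hq0key1]) j
    have h2 : Tendsto (fun m => Zseq m (q0 (key1 i) (key2 j)).1 j
        - Zseq m (q0 (key1 i) (key2 j)).1 (q0 (key1 i) (key2 j)).2) atTop (𝓝 0) :=
      hcomp_col j (q0 (key1 i) (key2 j)).2 (by rw [hq0key2]) (q0 (key1 i) (key2 j)).1
    have h3 := h1.add h2
    have heq : (fun m => (Zseq m i j - Zseq m (q0 (key1 i) (key2 j)).1 j)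
        + (Zseq m (q0 (key1 i) (key2 j)).1 j
          - Zseq m (q0 (key1 i) (key2 j)).1 (q0 (key1 i) (key2 j)).2))
        = fun m => Zseq m i j - lam m (key1 i) (key2 j) := by
      funext m; rw [hlamdef]; ring
    rw [heq] at h3
    simpa using h3
  -- the partition of Ω into biclusters
  have hcard_pos : ∀ r c, 0 < (biclusterObs Ω A B r c).card := by
    intro r c
    exact Finset.card_pos.mpr ⟨q0 r c, (hbic r c _).mpr ⟨hq0Ω r c, hq0key1 r c, hq0key2 r c⟩⟩
  have hsplit : ∀ f : Fin n × Fin p → ℝ,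
      ∑ q ∈ Ω, f q = ∑ r, ∑ c, ∑ q ∈ biclusterObs Ω A B r c, f q := by
    intro f
    have hfib := Finset.sum_fiberwise Ω (fun q => (key1 q.1, key2 q.2)) f
    rw [← hfib, Fintype.sum_prod_type]
    refine Finset.sum_congr rfl fun r _ => Finset.sum_congr rfl fun c _ => ?_
    congr 1
    ext q
    simp only [Finset.mem_filter, hbic, Prod.mk.injEq]
  -- block sums rewritten with constants
  have hblocklam : ∀ m, ∑ q ∈ Ω, (X q.1 q.2 - lam m (key1 q.1) (key2 q.2)) ^ 2
      = ∑ r, ∑ c, ∑ q ∈ biclusterObs Ω A B r c, (X q.1 q.2 - lam m r c) ^ 2 := by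
    intro m
    rw [hsplit (fun q => (X q.1 q.2 - lam m (key1 q.1) (key2 q.2)) ^ 2)]
    refine Finset.sum_congr rfl fun r _ => Finset.sum_congr rfl fun c _ =>
      Finset.sum_congr rfl fun q hq => ?_
    obtain ⟨_, h1, h2⟩ := (hbic r c q).mp hq
    rw [h1, h2]
  have hD0block : ∑ q ∈ Ω, (X q.1 q.2 - Zstar Ω X A B q.1 q.2) ^ 2
      = ∑ r, ∑ c, ∑ q ∈ biclusterObs Ω A B r c, (X q.1 q.2 - μ r c) ^ 2 := by
    rw [hsplit (fun q => (X q.1 q.2 - Zstar Ω X A B q.1 q.2) ^ 2)]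
    refine Finset.sum_congr rfl fun r _ => Finset.sum_congr rfl fun c _ =>
      Finset.sum_congr rfl fun q hq => ?_
    obtain ⟨_, h1, h2⟩ := (hbic r c q).mp hq
    rw [hZs, h1, h2]
  -- main identity: excess of the block-constant data fit
  set T : ℕ → ℝ := fun m => ∑ r, ∑ c,
      ((biclusterObs Ω A B r c).card : ℝ) * (lam m r c - μ r c) ^ 2 with hT
  have hident : ∀ m, (1 / 2 : ℝ) * ∑ q ∈ Ω, (X q.1 q.2 - lam m (key1 q.1) (key2 q.2)) ^ 2
      = D0 + (1 / 2) * T m := by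
    intro m
    rw [hblocklam m]
    have hstep : ∀ r c, ∑ q ∈ biclusterObs Ω A B r c, (X q.1 q.2 - lam m r c) ^ 2
        = ∑ q ∈ biclusterObs Ω A B r c, (X q.1 q.2 - μ r c) ^ 2
          + ((biclusterObs Ω A B r c).card : ℝ) * (lam m r c - μ r c) ^ 2 := by
      intro r c
      have := aux_mean_decomp (biclusterObs Ω A B r c) (fun q => X q.1 q.2) (lam m r c)
      rw [this, hμ]
    have : ∑ r, ∑ c, ∑ q ∈ biclusterObs Ω A B r c, (X q.1 q.2 - lam m r c) ^ 2
        = (∑ r, ∑ c, ∑ q ∈ biclusterObs Ω A B r c, (X q.1 q.2 - μ r c) ^ 2) + T m := by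
      rw [hT, ← Finset.sum_add_distrib]
      refine Finset.sum_congr rfl fun r _ => ?_
      rw [← Finset.sum_add_distrib]
      exact Finset.sum_congr rfl fun c _ => hstep r c
    rw [this, hD0, hD0block]
    ring
  -- the gap between the pinned data fit and the actual data fit tends to 0
  have hgap : Tendsto (fun m => (1 / 2 : ℝ) * ∑ q ∈ Ω,
      ((X q.1 q.2 - lam m (key1 q.1) (key2 q.2)) ^ 2 - (X q.1 q.2 - Zseq m q.1 q.2) ^ 2))
      atTop (𝓝 0) := by
    have hsum : Tendsto (fun m => ∑ q ∈ Ω,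
        ((X q.1 q.2 - lam m (key1 q.1) (key2 q.2)) ^ 2 - (X q.1 q.2 - Zseq m q.1 q.2) ^ 2))
        atTop (𝓝 0) := by
      have h0 : (0 : ℝ) = ∑ q ∈ Ω, (0 : ℝ) := by simp
      rw [h0]
      apply tendsto_finset_sum
      intro q hq
      have hu : Tendsto (fun m => Zseq m q.1 q.2 - lam m (key1 q.1) (key2 q.2)) atTop (𝓝 0) :=
        hclose q.1 q.2
      have ht1 : Tendsto (fun m => 2 * (Zseq m q.1 q.2 - lam m (key1 q.1) (key2 q.2))
          * (X q.1 q.2 - Zseq m q.1 q.2)) atTop (𝓝 0) := by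
        apply squeeze_zero_norm (a := fun m =>
          2 * Real.sqrt (2 * D0) * |Zseq m q.1 q.2 - lam m (key1 q.1) (key2 q.2)|)
        · intro m
          rw [Real.norm_eq_abs, abs_mul, abs_mul]
          have h1 := hresabs m q hq
          have h2 : (0:ℝ) ≤ |Zseq m q.1 q.2 - lam m (key1 q.1) (key2 q.2)| := abs_nonneg _
          have h3 : (0:ℝ) ≤ |(2:ℝ)| := abs_nonneg _
          calc |(2:ℝ)| * |Zseq m q.1 q.2 - lam m (key1 q.1) (key2 q.2)|
              * |X q.1 q.2 - Zseq m q.1 q.2|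
              ≤ |(2:ℝ)| * |Zseq m q.1 q.2 - lam m (key1 q.1) (key2 q.2)| * Real.sqrt (2 * D0) :=
                mul_le_mul_of_nonneg_left h1 (mul_nonneg h3 h2)
            _ = 2 * Real.sqrt (2 * D0) * |Zseq m q.1 q.2 - lam m (key1 q.1) (key2 q.2)| := by
                rw [abs_two]; ring
        · have := (hu.abs).const_mul (2 * Real.sqrt (2 * D0))
          simpa using this
      have ht2 : Tendsto (fun m =>
          (Zseq m q.1 q.2 - lam m (key1 q.1) (key2 q.2)) ^ 2) atTop (𝓝 0) := by
        have := hu.mul hu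
        simpa [sq] using this
      have := ht1.add ht2
      have heq : (fun m => 2 * (Zseq m q.1 q.2 - lam m (key1 q.1) (key2 q.2))
          * (X q.1 q.2 - Zseq m q.1 q.2)
          + (Zseq m q.1 q.2 - lam m (key1 q.1) (key2 q.2)) ^ 2)
          = fun m => (X q.1 q.2 - lam m (key1 q.1) (key2 q.2)) ^ 2
            - (X q.1 q.2 - Zseq m q.1 q.2) ^ 2 := by
        funext m; ring
      rw [heq] at this
      simpa using this
    have := hsum.const_mul (1 / 2 : ℝ)
    simpa using this
  -- T tends to zero
  have hTnn : ∀ m, 0 ≤ T m := by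
    intro m
    exact Finset.sum_nonneg fun r _ => Finset.sum_nonneg fun c _ =>
      mul_nonneg (Nat.cast_nonneg _) (sq_nonneg _)
  have hTle : ∀ m, T m ≤ 2 * ((1 / 2 : ℝ) * ∑ q ∈ Ω,
      ((X q.1 q.2 - lam m (key1 q.1) (key2 q.2)) ^ 2 - (X q.1 q.2 - Zseq m q.1 q.2) ^ 2)) := by
    intro m
    have h1 := hident m
    have h2 := hdata_le m
    have h3 : (1 / 2 : ℝ) * ∑ q ∈ Ω,
        ((X q.1 q.2 - lam m (key1 q.1) (key2 q.2)) ^ 2 - (X q.1 q.2 - Zseq m q.1 q.2) ^ 2)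
        = (1 / 2 : ℝ) * ∑ q ∈ Ω, (X q.1 q.2 - lam m (key1 q.1) (key2 q.2)) ^ 2
          - (1 / 2 : ℝ) * ∑ q ∈ Ω, (X q.1 q.2 - Zseq m q.1 q.2) ^ 2 := by
      rw [Finset.sum_sub_distrib]; ring
    linarith
  have hTzero : Tendsto T atTop (𝓝 0) := by
    apply squeeze_zero hTnn hTle
    have := hgap.const_mul (2 : ℝ)
    simpa using this
  -- block values converge to block means
  have hlamlim : ∀ r c, Tendsto (fun m => lam m r c) atTop (𝓝 (μ r c)) := by
    intro r c
    have hsq : Tendsto (fun m => (lam m r c - μ r c) ^ 2) atTop (𝓝 0) := by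
      apply squeeze_zero (fun m => sq_nonneg _) _ hTzero
      intro m
      have hone : (1 : ℝ) ≤ ((biclusterObs Ω A B r c).card : ℝ) := by
        exact_mod_cast hcard_pos r c
      have h1 : (lam m r c - μ r c) ^ 2
          ≤ ((biclusterObs Ω A B r c).card : ℝ) * (lam m r c - μ r c) ^ 2 :=
        le_mul_of_one_le_left (sq_nonneg _) hone
      have h2 : ((biclusterObs Ω A B r c).card : ℝ) * (lam m r c - μ r c) ^ 2
          ≤ ∑ c', ((biclusterObs Ω A B r c').card : ℝ) * (lam m r c' - μ r c') ^ 2 :=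
        Finset.single_le_sum
          (f := fun c' => ((biclusterObs Ω A B r c').card : ℝ) * (lam m r c' - μ r c') ^ 2)
          (fun c' _ => mul_nonneg (Nat.cast_nonneg _) (sq_nonneg _)) (Finset.mem_univ c)
      have h3 : ∑ c', ((biclusterObs Ω A B r c').card : ℝ) * (lam m r c' - μ r c') ^ 2
          ≤ T m :=
        Finset.single_le_sum
          (f := fun r' => ∑ c', ((biclusterObs Ω A B r' c').card : ℝ)
            * (lam m r' c' - μ r' c') ^ 2)
          (fun r' _ => Finset.sum_nonneg fun c' _ =>
            mul_nonneg (Nat.cast_nonneg _) (sq_nonneg _)) (Finset.mem_univ r)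
      linarith
    have hdiff : Tendsto (fun m => lam m r c - μ r c) atTop (𝓝 0) := aux_tendsto_of_sq _ hsq
    have := hdiff.add (tendsto_const_nhds (x := μ r c))
    simpa using this
  -- conclusion
  refine tendsto_pi_nhds.mpr ?_
  intro i
  rw [tendsto_pi_nhds]
  intro j
  have h1 := (hclose i j).add (hlamlim (key1 i) (key2 j))
  have heq : (fun m => (Zseq m i j - lam m (key1 i) (key2 j)) + lam m (key1 i) (key2 j))
      = fun m => Zseq m i j := by
    funext m; ring
  rw [heq] at h1
  rw [hZs i j]
  simpa using h1
end

section
/- (Normal equations for BMC) Suppose γ_r > 0, γ_c > 0, and Assumption 1 holds. Then S(γ_r, γ_c) = P_Ω + γ_r (I_p ⊗ L_r) + γ_c (L_c ⊗ I_n) is invertible, and a matrix Z ∈ ℝ^{n×p} is the unique global minimizer of F if and only if its column-major vectorization z = vec(Z) satisfies S(γ_r, γ_c) z = P_Ω vec(X); equivalently, z = S(γ_r, γ_c)^{-1} P_Ω vec(X). -/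
open Matrix BigOperators Finset Kronecker

/-- Column-major vectorization of an `n × p` matrix, indexed by `Fin p × Fin n`. -/
def vecCM {n p : ℕ} (Z : Matrix (Fin n) (Fin p) ℝ) : Fin p × Fin n → ℝ :=
  fun q => Z q.2 q.1

/-! ### Auxiliary lemmas -/

lemma BMCaux.sum_pairs {N : ℕ} (f : Fin N → Fin N → ℝ) (hf : ∀ i, f i i = 0) :
    ∑ i, ∑ j, f i j = ∑ i, ∑ j ∈ Finset.Ioi i, (f i j + f j i) := by
  have h := Finset.sum_sum_Ioi_add_eq_sum_sum_off_diag (f := fun i j => f j i)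
  rw [h]
  refine Finset.sum_congr rfl fun i _ => ?_
  symm
  apply Finset.sum_subset (Finset.subset_univ _)
  intro x _ hx
  simp only [Finset.mem_compl, Finset.mem_singleton, not_not] at hx
  simp [hx, hf]

lemma BMCaux.lap_mulVec {N : ℕ} (w : Fin N → Fin N → ℝ) (hdiag : ∀ i, w i i = 0)
    (x : Fin N → ℝ) (i : Fin N) :
    (lap w).mulVec x i = ∑ j, w i j * (x i - x j) := by
  simp only [mulVec, dotProduct, lap, Matrix.of_apply]
  calc ∑ j, (if i = j then ∑ k, w i k else -(w i j)) * x j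
      = ∑ j, ((if i = j then (∑ k, w i k) * x j else 0) + -(w i j) * x j) := by
        refine Finset.sum_congr rfl fun j _ => ?_
        by_cases h : i = j
        · subst h; simp [hdiag i]
        · simp [h]
    _ = (∑ k, w i k) * x i + ∑ j, -(w i j) * x j := by
        rw [Finset.sum_add_distrib, Finset.sum_ite_eq univ i]
        simp
    _ = ∑ j, w i j * (x i - x j) := by
        rw [Finset.sum_mul, ← Finset.sum_add_distrib]
        exact Finset.sum_congr rfl fun j _ => by ring

lemma BMCaux.lap_quadform {N : ℕ} (w : Fin N → Fin N → ℝ) (hsymm : ∀ i j, w i j = w j i)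
    (hdiag : ∀ i, w i i = 0) (x : Fin N → ℝ) :
    x ⬝ᵥ (lap w).mulVec x = ∑ i, ∑ j ∈ Finset.Ioi i, w i j * (x i - x j) ^ 2 := by
  have : x ⬝ᵥ (lap w).mulVec x = ∑ i, ∑ j, w i j * (x i * (x i - x j)) := by
    simp only [dotProduct]
    rw [Finset.sum_congr rfl fun i _ => by
      rw [BMCaux.lap_mulVec w hdiag x i, Finset.mul_sum]]
    exact Finset.sum_congr rfl fun i _ => Finset.sum_congr rfl fun j _ => by ring
  rw [this, BMCaux.sum_pairs _ (fun i => by simp [hdiag i])]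
  refine Finset.sum_congr rfl fun i _ => Finset.sum_congr rfl fun j _ => ?_
  rw [hsymm j i]; ring

lemma BMCaux.lap_transpose {N : ℕ} (w : Fin N → Fin N → ℝ) (hsymm : ∀ i j, w i j = w j i) :
    (lap w)ᵀ = lap w := by
  ext i j
  simp only [transpose_apply, lap, Matrix.of_apply]
  by_cases h : i = j
  · subst h; simp
  · simp [h, Ne.symm h, hsymm j i]

lemma BMCaux.kron_one_left_quad {n p : ℕ} (L : Matrix (Fin n) (Fin n) ℝ)
    (v : Fin p × Fin n → ℝ) :
    v ⬝ᵥ (((1 : Matrix (Fin p) (Fin p) ℝ) ⊗ₖ L) *ᵥ v)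
      = ∑ c, (fun i => v (c, i)) ⬝ᵥ (L *ᵥ fun i => v (c, i)) := by
  simp [dotProduct, mulVec, Fintype.sum_prod_type, one_apply, ite_mul, mul_ite,
    zero_mul, mul_zero, Finset.mul_sum]

lemma BMCaux.kron_one_right_quad {n p : ℕ} (L : Matrix (Fin p) (Fin p) ℝ)
    (v : Fin p × Fin n → ℝ) :
    v ⬝ᵥ ((L ⊗ₖ (1 : Matrix (Fin n) (Fin n) ℝ)) *ᵥ v)
      = ∑ i, (fun c => v (c, i)) ⬝ᵥ (L *ᵥ fun c => v (c, i)) := by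
  simp [dotProduct, mulVec, Fintype.sum_prod_type, one_apply, ite_mul, mul_ite,
    zero_mul, mul_zero, Finset.mul_sum]
  rw [Finset.sum_comm]

lemma BMCaux.sum_swap_Omega {n p : ℕ} (Ω : Finset (Fin n × Fin p)) (f : Fin p × Fin n → ℝ) :
    ∑ q : Fin p × Fin n, (if (q.2, q.1) ∈ Ω then f q else 0) = ∑ q ∈ Ω, f (q.2, q.1) := by
  rw [← Finset.sum_filter]
  exact Finset.sum_nbij' (fun q => (q.2, q.1)) (fun q => (q.2, q.1))
    (by simp) (by simp) (by simp) (by simp) (by simp)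

lemma BMCaux.Pmat_bilin {n p : ℕ} (Ω : Finset (Fin n × Fin p)) (u v : Fin p × Fin n → ℝ) :
    u ⬝ᵥ (Pmat Ω *ᵥ v) = ∑ q ∈ Ω, u (q.2, q.1) * v (q.2, q.1) := by
  have : ∀ q : Fin p × Fin n,
      u q * (Pmat Ω *ᵥ v) q = (if (q.2, q.1) ∈ Ω then u q * v q else 0) := by
    intro q
    rw [Pmat, mulVec_diagonal]
    split <;> ring
  rw [dotProduct, Finset.sum_congr rfl fun q _ => this q,
    BMCaux.sum_swap_Omega Ω (fun q => u q * v q)]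

/-- Row-graph quadratic form of `vecCM Z`. -/
lemma BMCaux.row_quad {n p : ℕ} (w : Fin n → Fin n → ℝ) (hsymm : ∀ i j, w i j = w j i)
    (hdiag : ∀ i, w i i = 0) (Z : Matrix (Fin n) (Fin p) ℝ) :
    vecCM Z ⬝ᵥ (((1 : Matrix (Fin p) (Fin p) ℝ) ⊗ₖ lap w) *ᵥ vecCM Z)
      = ∑ i, ∑ j ∈ Finset.Ioi i, w i j * ∑ k, (Z i k - Z j k) ^ 2 := by
  rw [BMCaux.kron_one_left_quad]
  rw [Finset.sum_congr rfl fun c _ => BMCaux.lap_quadform w hsymm hdiag _]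
  rw [Finset.sum_comm]
  refine Finset.sum_congr rfl fun i _ => ?_
  rw [Finset.sum_comm]
  exact Finset.sum_congr rfl fun j _ => by rw [Finset.mul_sum]; rfl

/-- Column-graph quadratic form of `vecCM Z`. -/
lemma BMCaux.col_quad {n p : ℕ} (wt : Fin p → Fin p → ℝ) (hsymm' : ∀ i j, wt i j = wt j i)
    (hdiag' : ∀ i, wt i i = 0) (Z : Matrix (Fin n) (Fin p) ℝ) :
    vecCM Z ⬝ᵥ ((lap wt ⊗ₖ (1 : Matrix (Fin n) (Fin n) ℝ)) *ᵥ vecCM Z)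
      = ∑ i, ∑ j ∈ Finset.Ioi i, wt i j * ∑ k, (Z k i - Z k j) ^ 2 := by
  rw [BMCaux.kron_one_right_quad]
  rw [Finset.sum_congr rfl fun i _ => BMCaux.lap_quadform wt hsymm' hdiag' _]
  rw [Finset.sum_comm]
  refine Finset.sum_congr rfl fun c _ => ?_
  rw [Finset.sum_comm]
  exact Finset.sum_congr rfl fun c' _ => by rw [Finset.mul_sum]; rfl

lemma BMCaux.eq_of_conn {α β : Type*} {G : SimpleGraph α} (f : α → β)
    (h : ∀ a b, G.Adj a b → f a = f b) {u v : α}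
    (huv : G.connectedComponentMk u = G.connectedComponentMk v) : f u = f v := by
  obtain ⟨wlk⟩ := SimpleGraph.ConnectedComponent.exact huv
  clear huv
  induction wlk with
  | nil => rfl
  | cons h' _ ih => exact (h _ _ h').trans ih

/-- normal equations for BMC: for `γr, γc > 0` under Assumption 1, `S` is
invertible and `Z` is the unique global minimizer of `F` iff `S vec(Z) = P_Ω vec(X)`,
equivalently `vec(Z) = S⁻¹ P_Ω vec(X)`. -/
theorem bmc_normal_equations {n p R C : ℕ} (Ω : Finset (Fin n × Fin p))
    (X : Matrix (Fin n) (Fin p) ℝ) (γr γc : ℝ) (hγr : 0 < γr) (hγc : 0 < γc)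
    (w : Fin n → Fin n → ℝ) (wt : Fin p → Fin p → ℝ)
    (hsymm : ∀ i j, w i j = w j i) (hnonneg : ∀ i j, 0 ≤ w i j)
    (hdiag : ∀ i, w i i = 0)
    (hsymm' : ∀ i j, wt i j = wt j i) (hnonneg' : ∀ i j, 0 ≤ wt i j)
    (hdiag' : ∀ i, wt i i = 0)
    (A : Fin R → Set (Fin n))
    (eA : (graphOf w).ConnectedComponent ≃ Fin R)
    (hA : ∀ r, A r = {v | eA ((graphOf w).connectedComponentMk v) = r})
    (B : Fin C → Set (Fin p))
    (eB : (graphOf wt).ConnectedComponent ≃ Fin C)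
    (hB : ∀ c, B c = {v | eB ((graphOf wt).connectedComponentMk v) = c})
    (hobs : ∀ r c, ∃ q ∈ Ω, q.1 ∈ A r ∧ q.2 ∈ B c) :
    IsUnit (Smat Ω γr γc (lap w) (lap wt)) ∧
    (∀ Z : Matrix (Fin n) (Fin p) ℝ,
      ((∀ Z' : Matrix (Fin n) (Fin p) ℝ,
          objF Ω X γr γc w wt Z ≤ objF Ω X γr γc w wt Z') ↔
        (Smat Ω γr γc (lap w) (lap wt)).mulVec (vecCM Z) = (Pmat Ω).mulVec (vecCM X))) ∧
    (∀ Z : Matrix (Fin n) (Fin p) ℝ,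
      ((∀ Z' : Matrix (Fin n) (Fin p) ℝ,
          objF Ω X γr γc w wt Z ≤ objF Ω X γr γc w wt Z') ↔
        vecCM Z = (Smat Ω γr γc (lap w) (lap wt))⁻¹.mulVec ((Pmat Ω).mulVec (vecCM X)))) := by
  set S := Smat Ω γr γc (lap w) (lap wt) with hS
  set x := vecCM X with hx
  set b := (Pmat Ω).mulVec x with hb
  -- splitting of the quadratic form
  have hsplit : ∀ v : Fin p × Fin n → ℝ,
      v ⬝ᵥ S *ᵥ v = v ⬝ᵥ (Pmat Ω *ᵥ v)
        + γr * (v ⬝ᵥ (((1 : Matrix (Fin p) (Fin p) ℝ) ⊗ₖ lap w) *ᵥ v))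
        + γc * (v ⬝ᵥ ((lap wt ⊗ₖ (1 : Matrix (Fin n) (Fin n) ℝ)) *ᵥ v)) := by
    intro v
    rw [hS, Smat, add_mulVec, add_mulVec, smul_mulVec, smul_mulVec,
      dotProduct_add, dotProduct_add, dotProduct_smul, dotProduct_smul]
    simp [smul_eq_mul]
  -- symmetry of S
  have hSsymm : Sᵀ = S := by
    rw [hS, Smat, transpose_add, transpose_add, transpose_smul, transpose_smul,
      Pmat, diagonal_transpose, ← kroneckerMap_transpose, ← kroneckerMap_transpose,
      BMCaux.lap_transpose w hsymm, BMCaux.lap_transpose wt hsymm',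
      transpose_one, transpose_one]
  have hdotsymm : ∀ u v : Fin p × Fin n → ℝ, u ⬝ᵥ S *ᵥ v = v ⬝ᵥ S *ᵥ u := by
    intro u v
    rw [dotProduct_mulVec, ← hSsymm, vecMul_transpose, hSsymm, dotProduct_comm]
  -- positive definiteness
  have hpos : ∀ v : Fin p × Fin n → ℝ, v ≠ 0 → 0 < v ⬝ᵥ S *ᵥ v := by
    intro v hv
    set T0 := ∑ q ∈ Ω, v (q.2, q.1) * v (q.2, q.1) with hT0def
    set T1 := ∑ i, ∑ j ∈ Finset.Ioi i, w i j * ∑ c, (v (c, i) - v (c, j)) ^ 2 with hT1def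
    set T2 := ∑ c, ∑ c' ∈ Finset.Ioi c, wt c c' * ∑ i, (v (c, i) - v (c', i)) ^ 2 with hT2def
    have hvq : v ⬝ᵥ S *ᵥ v = T0 + γr * T1 + γc * T2 := by
      have h1 := BMCaux.row_quad w hsymm hdiag (Matrix.of fun i c => v (c, i))
      have h2 := BMCaux.col_quad wt hsymm' hdiag' (Matrix.of fun i c => v (c, i))
      have hvz : vecCM (Matrix.of fun i c => v (c, i)) = v := by
        funext q; rfl
      rw [hvz] at h1 h2
      rw [hsplit v, BMCaux.Pmat_bilin, h1, h2]
      rfl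
    have hT0 : 0 ≤ T0 := Finset.sum_nonneg fun q _ => mul_self_nonneg _
    have hT1 : 0 ≤ T1 := Finset.sum_nonneg fun i _ => Finset.sum_nonneg fun j _ =>
      mul_nonneg (hnonneg i j) (Finset.sum_nonneg fun c _ => sq_nonneg _)
    have hT2 : 0 ≤ T2 := Finset.sum_nonneg fun c _ => Finset.sum_nonneg fun c' _ =>
      mul_nonneg (hnonneg' c c') (Finset.sum_nonneg fun i _ => sq_nonneg _)
    rcases lt_or_eq_of_le (by positivity :
        (0:ℝ) ≤ T0 + γr * T1 + γc * T2) with hlt | heq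
    · rw [hvq]; exact hlt
    exfalso
    -- each part is zero
    have hT0z : T0 = 0 := by nlinarith [mul_nonneg hγr.le hT1, mul_nonneg hγc.le hT2]
    have hT1z : T1 = 0 := by nlinarith [mul_nonneg hγr.le hT1, mul_nonneg hγc.le hT2]
    have hT2z : T2 = 0 := by nlinarith [mul_nonneg hγr.le hT1, mul_nonneg hγc.le hT2]
    -- rows equal along edges
    have hrow0 : ∀ i j, i < j → 0 < w i j → ∀ c, v (c, i) = v (c, j) := by
      intro i j hij hw c
      have h1 : ∀ i ∈ (univ : Finset (Fin n)), 0 ≤ ∑ j ∈ Finset.Ioi i,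
          w i j * ∑ c, (v (c, i) - v (c, j)) ^ 2 :=
        fun i _ => Finset.sum_nonneg fun j _ =>
          mul_nonneg (hnonneg i j) (Finset.sum_nonneg fun c _ => sq_nonneg _)
      have h3 : ∑ j' ∈ Finset.Ioi i, w i j' * ∑ c, (v (c, i) - v (c, j')) ^ 2 = 0 :=
        (Finset.sum_eq_zero_iff_of_nonneg h1).1 hT1z i (Finset.mem_univ i)
      have h4 : w i j * ∑ c, (v (c, i) - v (c, j)) ^ 2 = 0 :=
        (Finset.sum_eq_zero_iff_of_nonneg (fun j' _ =>
          mul_nonneg (hnonneg i j') (Finset.sum_nonneg fun c _ => sq_nonneg _))).1 h3 j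
          (Finset.mem_Ioi.2 hij)
      have h5 : ∑ c, (v (c, i) - v (c, j)) ^ 2 = 0 := by
        rcases mul_eq_zero.1 h4 with h | h
        · exact absurd h hw.ne'
        · exact h
      have h6 := (Finset.sum_eq_zero_iff_of_nonneg (fun c _ => sq_nonneg _)).1 h5 c
        (Finset.mem_univ c)
      have := pow_eq_zero_iff (n := 2) (by norm_num) |>.1 h6
      linarith [sub_eq_zero.1 this]
    have hrow : ∀ i j, (graphOf w).Adj i j → ∀ c, v (c, i) = v (c, j) := by
      intro i j hadj c
      rw [graphOf, SimpleGraph.fromRel_adj] at hadj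
      obtain ⟨hne, hw⟩ := hadj
      have hwij : 0 < w i j := by
        rcases hw with h | h
        · exact h
        · rw [hsymm]; exact h
      rcases lt_or_gt_of_ne hne with hlt | hlt
      · exact hrow0 i j hlt hwij c
      · exact (hrow0 j i hlt (by rw [hsymm]; exact hwij) c).symm
    have hcol0 : ∀ c c', c < c' → 0 < wt c c' → ∀ i, v (c, i) = v (c', i) := by
      intro c c' hcc hw i
      have h1 : ∀ c ∈ (univ : Finset (Fin p)), 0 ≤ ∑ c' ∈ Finset.Ioi c,
          wt c c' * ∑ i, (v (c, i) - v (c', i)) ^ 2 :=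
        fun c _ => Finset.sum_nonneg fun c' _ =>
          mul_nonneg (hnonneg' c c') (Finset.sum_nonneg fun i _ => sq_nonneg _)
      have h3 : ∑ d ∈ Finset.Ioi c, wt c d * ∑ i, (v (c, i) - v (d, i)) ^ 2 = 0 :=
        (Finset.sum_eq_zero_iff_of_nonneg h1).1 hT2z c (Finset.mem_univ c)
      have h4 : wt c c' * ∑ i, (v (c, i) - v (c', i)) ^ 2 = 0 :=
        (Finset.sum_eq_zero_iff_of_nonneg (fun d _ =>
          mul_nonneg (hnonneg' c d) (Finset.sum_nonneg fun i _ => sq_nonneg _))).1 h3 c'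
          (Finset.mem_Ioi.2 hcc)
      have h5 : ∑ i, (v (c, i) - v (c', i)) ^ 2 = 0 := by
        rcases mul_eq_zero.1 h4 with h | h
        · exact absurd h hw.ne'
        · exact h
      have h6 := (Finset.sum_eq_zero_iff_of_nonneg (fun i _ => sq_nonneg _)).1 h5 i
        (Finset.mem_univ i)
      have := pow_eq_zero_iff (n := 2) (by norm_num) |>.1 h6
      linarith [sub_eq_zero.1 this]
    have hcol : ∀ c c', (graphOf wt).Adj c c' → ∀ i, v (c, i) = v (c', i) := by
      intro c c' hadj i
      rw [graphOf, SimpleGraph.fromRel_adj] at hadj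
      obtain ⟨hne, hw⟩ := hadj
      have hwcc : 0 < wt c c' := by
        rcases hw with h | h
        · exact h
        · rw [hsymm']; exact h
      rcases lt_or_gt_of_ne hne with hlt | hlt
      · exact hcol0 c c' hlt hwcc i
      · exact (hcol0 c' c hlt (by rw [hsymm']; exact hwcc) i).symm
    -- component constancy
    have hrowC : ∀ i j : Fin n, (graphOf w).connectedComponentMk i
        = (graphOf w).connectedComponentMk j → ∀ c, v (c, i) = v (c, j) := by
      intro i j hij c
      have := BMCaux.eq_of_conn (G := graphOf w) (f := fun i => fun c => v (c, i))
        (fun a b hab => funext fun c => hrow a b hab c) hij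
      exact congrFun this c
    have hcolC : ∀ c c' : Fin p, (graphOf wt).connectedComponentMk c
        = (graphOf wt).connectedComponentMk c' → ∀ i, v (c, i) = v (c', i) := by
      intro c c' hcc i
      have := BMCaux.eq_of_conn (G := graphOf wt) (f := fun c => fun i => v (c, i))
        (fun a b hab => funext fun i => hcol a b hab i) hcc
      exact congrFun this i
    -- observed entries are zero
    have hobs0 : ∀ q ∈ Ω, v (q.2, q.1) = 0 := by
      intro q hq
      have := (Finset.sum_eq_zero_iff_of_nonneg
        (fun q _ => mul_self_nonneg (v (q.2, q.1)))).1 hT0z q hq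
      exact mul_self_eq_zero.1 this
    -- conclude v = 0
    apply hv
    funext q
    obtain ⟨q', hq'Ω, hq'1, hq'2⟩ :=
      hobs (eA ((graphOf w).connectedComponentMk q.2)) (eB ((graphOf wt).connectedComponentMk q.1))
    rw [hA] at hq'1
    rw [hB] at hq'2
    have hcompr : (graphOf w).connectedComponentMk q'.1
        = (graphOf w).connectedComponentMk q.2 := eA.injective hq'1
    have hcompc : (graphOf wt).connectedComponentMk q'.2
        = (graphOf wt).connectedComponentMk q.1 := eB.injective hq'2
    have : v (q.1, q.2) = v (q'.2, q'.1) := by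
      rw [hrowC q.2 q'.1 hcompr.symm q.1, hcolC q.1 q'.2 hcompc.symm q'.1]
    rw [show q = (q.1, q.2) from rfl, this, hobs0 q' hq'Ω]
    rfl
  -- invertibility
  have hdet : S.det ≠ 0 := by
    intro h0
    obtain ⟨v, hv, hSv⟩ := (Matrix.exists_mulVec_eq_zero_iff).2 h0
    have := hpos v hv
    rw [hSv] at this
    simp at this
  have hunit : IsUnit S := (Matrix.isUnit_iff_isUnit_det S).2 (isUnit_iff_ne_zero.2 hdet)
  -- objective in quadratic form
  have hobj : ∀ Z : Matrix (Fin n) (Fin p) ℝ,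
      objF Ω X γr γc w wt Z = (1/2) * (vecCM Z ⬝ᵥ S *ᵥ vecCM Z) - vecCM Z ⬝ᵥ b
        + (1/2) * (x ⬝ᵥ (Pmat Ω *ᵥ x)) := by
    intro Z
    set z := vecCM Z with hz
    have e1 : ∑ q ∈ Ω, (X q.1 q.2 - Z q.1 q.2) ^ 2 = (x - z) ⬝ᵥ (Pmat Ω *ᵥ (x - z)) := by
      rw [BMCaux.Pmat_bilin]
      exact Finset.sum_congr rfl fun q _ => by
        simp [hx, hz, vecCM, Pi.sub_apply]; ring
    have e2 := BMCaux.row_quad w hsymm hdiag Z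
    have e3 := BMCaux.col_quad wt hsymm' hdiag' Z
    have ezx : z ⬝ᵥ (Pmat Ω *ᵥ x) = x ⬝ᵥ (Pmat Ω *ᵥ z) := by
      rw [BMCaux.Pmat_bilin, BMCaux.Pmat_bilin]
      exact Finset.sum_congr rfl fun q _ => mul_comm _ _
    have esub : (x - z) ⬝ᵥ (Pmat Ω *ᵥ (x - z))
        = x ⬝ᵥ (Pmat Ω *ᵥ x) - 2 * (z ⬝ᵥ (Pmat Ω *ᵥ x)) + z ⬝ᵥ (Pmat Ω *ᵥ z) := by
      rw [mulVec_sub, dotProduct_sub, sub_dotProduct, sub_dotProduct, ezx]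
      ring
    rw [objF, Jpen, e1, esub, ← e2, ← e3, hsplit z, hb]
    ring
  -- key expansion
  have hexp : ∀ z d : Fin p × Fin n → ℝ,
      (1/2) * ((z + d) ⬝ᵥ S *ᵥ (z + d)) - (z + d) ⬝ᵥ b
        = ((1/2) * (z ⬝ᵥ S *ᵥ z) - z ⬝ᵥ b) + d ⬝ᵥ (S *ᵥ z - b)
          + (1/2) * (d ⬝ᵥ S *ᵥ d) := by
    intro z d
    have h1 : (z + d) ⬝ᵥ S *ᵥ (z + d)
        = z ⬝ᵥ S *ᵥ z + 2 * (d ⬝ᵥ S *ᵥ z) + d ⬝ᵥ S *ᵥ d := by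
      rw [mulVec_add, dotProduct_add, add_dotProduct, add_dotProduct, hdotsymm z d]
      ring
    rw [h1, add_dotProduct, dotProduct_sub]
    ring
  -- the iff for minimizers
  have hmain : ∀ Z : Matrix (Fin n) (Fin p) ℝ,
      ((∀ Z' : Matrix (Fin n) (Fin p) ℝ,
          objF Ω X γr γc w wt Z ≤ objF Ω X γr γc w wt Z') ↔ S *ᵥ vecCM Z = b) := by
    intro Z
    constructor
    · intro hmin
      by_contra hne
      set g := S *ᵥ vecCM Z - b with hg
      have hgne : g ≠ 0 := sub_ne_zero.2 hne
      have hgg : 0 < g ⬝ᵥ g := by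
        have h1 : 0 ≤ g ⬝ᵥ g := by
          refine Finset.sum_nonneg fun q _ => mul_self_nonneg _
        exact lt_of_le_of_ne h1 fun h => hgne (dotProduct_self_eq_zero.1 h.symm)
      have hgSg : 0 < g ⬝ᵥ S *ᵥ g := hpos g hgne
      set t := (g ⬝ᵥ g) / (g ⬝ᵥ S *ᵥ g) with ht
      set d := -t • g with hd
      set Z' := Matrix.of fun i c => (vecCM Z + d) (c, i) with hZ'
      have hvZ' : vecCM Z' = vecCM Z + d := by funext q; rfl
      have e1 : d ⬝ᵥ (S *ᵥ vecCM Z - b) = -t * (g ⬝ᵥ g) := by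
        rw [hd, ← hg, smul_dotProduct, smul_eq_mul]
      have e2 : d ⬝ᵥ S *ᵥ d = t ^ 2 * (g ⬝ᵥ S *ᵥ g) := by
        simp only [hd, smul_dotProduct, mulVec_smul, dotProduct_smul, smul_eq_mul]
        ring
      have key : -t * (g ⬝ᵥ g) + 1 / 2 * (t ^ 2 * (g ⬝ᵥ S *ᵥ g)) < 0 := by
        have keq : -t * (g ⬝ᵥ g) + 1 / 2 * (t ^ 2 * (g ⬝ᵥ S *ᵥ g))
            = -((g ⬝ᵥ g) ^ 2 / (2 * (g ⬝ᵥ S *ᵥ g))) := by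
          rw [ht]
          field_simp
          ring
        rw [keq, neg_lt, neg_zero]
        positivity
      have hlt : objF Ω X γr γc w wt Z' < objF Ω X γr γc w wt Z := by
        rw [hobj, hobj, hvZ', hexp, e1, e2]
        linarith [key]
      exact absurd (hmin Z') (not_le.2 hlt)
    · intro heq Z'
      rw [hobj, hobj]
      have hd : vecCM Z' = vecCM Z + (vecCM Z' - vecCM Z) := by ring
      rw [hd, hexp, heq, sub_self, dotProduct_zero]
      rcases eq_or_ne (vecCM Z' - vecCM Z) 0 with h | h
      · rw [h]; simp
      · nlinarith [hpos _ h]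
  refine ⟨hunit, hmain, fun Z => ?_⟩
  rw [hmain Z]
  constructor
  · intro h
    rw [← h, mulVec_mulVec, Matrix.nonsing_inv_mul S (isUnit_iff_ne_zero.2 hdet), one_mulVec]
  · intro h
    rw [h, mulVec_mulVec, Matrix.mul_nonsing_inv S (isUnit_iff_ne_zero.2 hdet), one_mulVec]
end
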